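/- arXiv:2107.05461 — 3 statements merged into one kernel-verified Lean document; each statement's English description precedes it below -/
import Mathlib

section
/- Under Assumption (C): let α be (C,τ)-Diophantine and let L ∈ ℕ satisfy C/(2L^τ) ≥ 7ν/d. Let n ≠ m be integers with 0 < |n| ≤ L and 0 < |m| ≤ L, and let E_n, E_m be points in the interior of J with T_f(E_n) − nα ∈ ℤ and T_f(E_m) − mα ∈ ℤ. Assume moreover that ‖T_f(E)‖_𝕋 ≥ C/(2L^τ) for every E between E_n and E_m. Then |E_n − E_m| ≥ (ν/2)·‖(n−m)α‖_𝕋 ≥ Cν/(2·(2L)^τ). -/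
/-!
Between `E_n` and `E_m` both branch points `f₋⁻¹(E)`, `f₊⁻¹(E)` are `ν`-steep, so both inverse
branches are `ν⁻¹`-Lipschitz there and `‖(n-m)α‖_𝕋 ≤ |T_f(E_n) - T_f(E_m)| ≤ 2|E_n - E_m|/ν`.

Steepness comes from the Morse condition: on a branch `f'` has no interior minimum of size
`< d`, so `|f'| < ν` only occurs on a branch that starts at a critical point `c` shared with the
other branch, within `q = ν/(d-ν)` of `c` and at energy within `νq` of `f c`. Beyond `c + q`
the other branch is `ν`-steep, so its point at the same energy is within `2q` of `c`. Hence
`|T_f(E)| ≤ 3q < 7ν/d ≤ C/(2L^τ)`, contradicting the lower bound on `‖T_f(E)‖_𝕋`.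
-/

/-- Distance from a real number to the nearest integer, `‖x‖_𝕋`. -/
noncomputable def torusNorm (x : ℝ) : ℝ := |x - round x|

def IsDiophantine (C τ α : ℝ) : Prop :=
  ∀ n : ℤ, n ≠ 0 → ∀ p : ℤ, C / |(n : ℝ)| ^ τ ≤ |(n : ℝ) * α - (p : ℝ)|

open Set

theorem exists_mem_Icc_sub_eq_mul {f f' : ℝ → ℝ} {x y : ℝ} (hxy : x ≤ y)
    (hf : ∀ t ∈ Icc x y, HasDerivAt f (f' t) t) :
    ∃ ξ ∈ Icc x y, f y - f x = f' ξ * (y - x) := by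
  rcases hxy.eq_or_lt with rfl | hlt
  · exact ⟨x, left_mem_Icc.2 le_rfl, by simp⟩
  obtain ⟨ξ, hξ, hslope⟩ := exists_hasDerivAt_eq_slope f f' hlt
    (fun t ht => (hf t ht).continuousAt.continuousWithinAt)
    (fun t ht => hf t (Ioo_subset_Icc_self ht))
  exact ⟨ξ, Ioo_subset_Icc_self hξ, by rw [hslope, div_mul_cancel₀ _ (sub_ne_zero.2 hlt.ne')]⟩

theorem exists_mem_uIcc_sub_eq_mul {f f' : ℝ → ℝ} {x y : ℝ}
    (hf : ∀ t ∈ uIcc x y, HasDerivAt f (f' t) t) :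
    ∃ ξ ∈ uIcc x y, f y - f x = f' ξ * (y - x) := by
  rcases le_total x y with hxy | hyx
  · rw [uIcc_of_le hxy] at hf ⊢
    exact exists_mem_Icc_sub_eq_mul hxy hf
  · rw [uIcc_of_ge hyx] at hf ⊢
    obtain ⟨ξ, hξ, hmvt⟩ := exists_mem_Icc_sub_eq_mul hyx hf
    exact ⟨ξ, hξ, by linear_combination -hmvt⟩

theorem mul_abs_sub_le_abs_sub {f f' g : ℝ → ℝ} {s : Set ℝ} [hs : s.OrdConnected] {E₁ E₂ ν : ℝ}
    (hf : ∀ t ∈ s, HasDerivAt f (f' t) t) (hmono : StrictMonoOn f s ∨ StrictAntiOn f s)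
    (hg : ∀ E ∈ uIcc E₁ E₂, g E ∈ s ∧ f (g E) = E) (hν : ∀ E ∈ uIcc E₁ E₂, ν ≤ |f' (g E)|) :
    ν * |g E₁ - g E₂| ≤ |E₁ - E₂| := by
  obtain ⟨hs₁, hf₁⟩ := hg E₁ left_mem_uIcc
  obtain ⟨hs₂, hf₂⟩ := hg E₂ right_mem_uIcc
  have hsub : uIcc (g E₁) (g E₂) ⊆ s := hs.uIcc_subset hs₁ hs₂
  have hmaps : MapsTo f (uIcc (g E₁) (g E₂)) (uIcc E₁ E₂) := by
    rcases hmono with hmono | hmono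
    · simpa only [hf₁, hf₂] using (hmono.monotoneOn.mono hsub).mapsTo_uIcc
    · simpa only [hf₁, hf₂] using (hmono.antitoneOn.mono hsub).mapsTo_uIcc
  have hinj : InjOn f s := hmono.elim StrictMonoOn.injOn StrictAntiOn.injOn
  have hsteep : ∀ t ∈ uIcc (g E₁) (g E₂), ν ≤ |f' t| := fun t ht => by
    obtain ⟨hgs, hfg⟩ := hg _ (hmaps ht)
    simpa only [hinj hgs (hsub ht) hfg] using hν _ (hmaps ht)
  obtain ⟨ξ, hξ, hmvt⟩ := exists_mem_uIcc_sub_eq_mul fun t ht => hf t (hsub ht)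
  calc ν * |g E₁ - g E₂| ≤ |f' ξ| * |g E₂ - g E₁| := by
        rw [abs_sub_comm]; exact mul_le_mul_of_nonneg_right (hsteep ξ hξ) (abs_nonneg _)
    _ = |E₁ - E₂| := by rw [← abs_mul, ← hmvt, hf₁, hf₂, abs_sub_comm]

theorem mem_frontier_of_subset_compl {X : Type*} [TopologicalSpace X] {s t : Set X} {x : X}
    (hx : x ∈ s) (ht : t ⊆ sᶜ) (hxt : x ∈ closure t) : x ∈ frontier s := by
  rw [frontier_eq_closure_inter_closure]
  exact ⟨subset_closure hx, closure_mono ht hxt⟩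

theorem lt_of_mem_interior_image_Icc {f : ℝ → ℝ} {a b E : ℝ}
    (hE : E ∈ interior (f '' Icc a b)) : a < b := by
  by_contra! hba
  rw [((subsingleton_Icc_of_ge hba).image f).eq_singleton_of_mem (interior_subset hE),
    interior_singleton] at hE
  exact hE

theorem torusNorm_le_abs (x : ℝ) : torusNorm x ≤ |x| := by
  simpa [torusNorm] using round_le x 0

theorem torusNorm_sub_mul_le {α x y : ℝ} {n m p q : ℤ} (hp : x - n * α = p)
    (hq : y - m * α = q) : torusNorm ((n - m) * α) ≤ |x - y| := by
  calc torusNorm ((n - m) * α) ≤ |(n - m) * α - ((q - p : ℤ) : ℝ)| := round_le _ _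
    _ = |x - y| := by
      congr 1
      push_cast
      linarith

theorem IsDiophantine.div_rpow_le_torusNorm {C τ α N : ℝ} (hα : IsDiophantine C τ α)
    (hC : 0 ≤ C) (hτ : 0 ≤ τ) {k : ℤ} (hk : k ≠ 0) (hkN : |(k : ℝ)| ≤ N) :
    C / N ^ τ ≤ torusNorm (k * α) :=
  (div_le_div_of_nonneg_left hC (Real.rpow_pos_of_pos (abs_pos.2 (Int.cast_ne_zero.2 hk)) τ)
    (Real.rpow_le_rpow (abs_nonneg _) hkN hτ)).trans (hα k hk _)

theorem IsDiophantine.div_rpow_le_torusNorm_sub {C τ α : ℝ} (hα : IsDiophantine C τ α)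
    (hC : 0 ≤ C) (hτ : 0 ≤ τ) {L : ℕ} {n m : ℤ} (hnm : n ≠ m) (hn : |n| ≤ L) (hm : |m| ≤ L) :
    C / (2 * (L : ℝ)) ^ τ ≤ torusNorm ((n - m) * α) := by
  have hL : |n - m| ≤ 2 * (L : ℤ) := (abs_sub n m).trans (by linarith)
  have hk : |((n - m : ℤ) : ℝ)| ≤ 2 * L := by
    rw [← Int.cast_abs]
    exact_mod_cast hL
  simpa using hα.div_rpow_le_torusNorm hC hτ (sub_ne_zero.2 hnm) hk

theorem three_mul_div_sub_lt_seven_mul_div {d ν : ℝ} (hν : 0 < ν) (hνd : ν < d / 2) :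
    3 * (ν / (d - ν)) < 7 * ν / d := by
  rw [mul_div_assoc', div_lt_div_iff₀ (by linarith) (by linarith)]
  nlinarith

structure IsMorseOn (d : ℝ) (f f' f'' : ℝ → ℝ) (s : Set ℝ) : Prop where
  hasDerivAt : ∀ t ∈ s, HasDerivAt f (f' t) t
  hasDerivAt_deriv : ∀ t ∈ s, HasDerivAt f' (f'' t) t
  le_abs_add_abs : ∀ t ∈ s, d ≤ |f' t| + |f'' t|

namespace IsMorseOn

variable {d ν : ℝ} {f f' f'' : ℝ → ℝ} {s t : Set ℝ}

theorem mono (h : IsMorseOn d f f' f'' s) (hts : t ⊆ s) : IsMorseOn d f f' f'' t :=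
  ⟨fun x hx => h.hasDerivAt x (hts hx), fun x hx => h.hasDerivAt_deriv x (hts hx),
    fun x hx => h.le_abs_add_abs x (hts hx)⟩

theorem neg (h : IsMorseOn d f f' f'' s) :
    IsMorseOn d (fun x => -f x) (fun x => -f' x) (fun x => -f'' x) s where
  hasDerivAt x hx := (h.hasDerivAt x hx).neg
  hasDerivAt_deriv x hx := (h.hasDerivAt_deriv x hx).neg
  le_abs_add_abs x hx := by simpa only [abs_neg] using h.le_abs_add_abs x hx

theorem comp_neg (h : IsMorseOn d f f' f'' s) :
    IsMorseOn d (fun x => f (-x)) (fun x => -f' (-x)) (fun x => f'' (-x)) (-s) where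
  hasDerivAt x hx := by
    have := (h.hasDerivAt (-x) hx).comp x (hasDerivAt_neg x)
    rwa [mul_neg_one] at this
  hasDerivAt_deriv x hx := by
    have := ((h.hasDerivAt_deriv (-x) hx).comp x (hasDerivAt_neg x)).neg
    rwa [mul_neg_one, neg_neg] at this
  le_abs_add_abs x hx := by simpa only [abs_neg] using h.le_abs_add_abs (-x) hx

theorem continuousOn (h : IsMorseOn d f f' f'' s) : ContinuousOn f s :=
  fun x hx => (h.hasDerivAt x hx).continuousAt.continuousWithinAt

theorem strictMonoOn {a b : ℝ} (h : IsMorseOn d f f' f'' (Icc a b)) (hd : 0 < d)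
    (hnonneg : ∀ t ∈ Icc a b, 0 ≤ f' t) : StrictMonoOn f (Icc a b) := by
  have hmono : MonotoneOn f (Icc a b) :=
    monotoneOn_of_hasDerivWithinAt_nonneg (convex_Icc a b) h.continuousOn
      (fun x hx => (h.hasDerivAt x (interior_subset hx)).hasDerivWithinAt)
      (fun x hx => hnonneg x (interior_subset hx))
  intro x hx y hy hxy
  refine (hmono hx hy hxy.le).lt_of_ne fun hfxy => ?_
  have hsub : Ioo x y ⊆ Icc a b := Ioo_subset_Icc_self.trans (Icc_subset_Icc hx.1 hy.2)
  -- `f` is constant on `[x, y]`, so `f'` vanishes on `(x, y)`, and then so does `f''`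
  have hconst : ∀ t ∈ Ioo x y, f t = f x := fun t ht =>
    le_antisymm (hfxy ▸ hmono (hsub ht) hy ht.2.le) (hmono hx (hsub ht) ht.1.le)
  have hderiv : ∀ t ∈ Ioo x y, f' t = 0 := fun t ht =>
    ((isMinOn_iff.2 fun u hu => (hconst t ht).trans_le (hconst u hu).ge).isLocalMin
      (Ioo_mem_nhds ht.1 ht.2)).hasDerivAt_eq_zero (h.hasDerivAt t (hsub ht))
  have hmid : (x + y) / 2 ∈ Ioo x y := ⟨by linarith, by linarith⟩
  have hderiv₂ : f'' ((x + y) / 2) = 0 :=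
    ((isMinOn_iff.2 fun u hu => (hderiv _ hmid).trans_le (hderiv u hu).ge).isLocalMin
      (Ioo_mem_nhds hmid.1 hmid.2)).hasDerivAt_eq_zero (h.hasDerivAt_deriv _ (hsub hmid))
  have := h.le_abs_add_abs _ (hsub hmid)
  rw [hderiv _ hmid, hderiv₂, abs_zero, add_zero] at this
  linarith

theorem strictAntiOn {a b : ℝ} (h : IsMorseOn d f f' f'' (Icc a b)) (hd : 0 < d)
    (hnonpos : ∀ t ∈ Icc a b, f' t ≤ 0) : StrictAntiOn f (Icc a b) := by
  simpa using (h.neg.strictMonoOn hd fun t ht => neg_nonneg.2 (hnonpos t ht)).neg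

/-- An interior minimum of `f'` below `d` would violate the Morse condition, as `f''` vanishes
there. -/
theorem min_le_deriv {x y u : ℝ} (h : IsMorseOn d f f' f'' (Icc x y))
    (hnonneg : ∀ t ∈ Icc x y, 0 ≤ f' t) (hu : u ∈ Icc x y) (hud : f' u < d) :
    min (f' x) (f' y) ≤ f' u := by
  by_contra! hlt
  rw [lt_min_iff] at hlt
  obtain ⟨ξ, hξ, hmin⟩ := isCompact_Icc.exists_isMinOn ⟨u, hu⟩
    fun t ht => (h.hasDerivAt_deriv t ht).continuousAt.continuousWithinAt
  have hξu : f' ξ ≤ f' u := hmin hu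
  have hξx : x ≠ ξ := by rintro rfl; exact hlt.1.not_ge hξu
  have hξy : ξ ≠ y := by rintro rfl; exact hlt.2.not_ge hξu
  have hzero : f'' ξ = 0 := (hmin.isLocalMin (Icc_mem_nhds (hξ.1.lt_of_ne hξx)
    (hξ.2.lt_of_ne hξy))).hasDerivAt_eq_zero (h.hasDerivAt_deriv ξ hξ)
  have := h.le_abs_add_abs ξ hξ
  rw [hzero, abs_zero, add_zero, abs_of_nonneg (hnonneg ξ hξ)] at this
  linarith

theorem le_abs_deriv_of_endpoints {x y u : ℝ} (h : IsMorseOn d f f' f'' (Icc x y))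
    (hsign : (∀ t ∈ Icc x y, 0 ≤ f' t) ∨ ∀ t ∈ Icc x y, f' t ≤ 0) (hνd : ν ≤ d)
    (hx : ν ≤ |f' x|) (hy : ν ≤ |f' y|) (hu : u ∈ Icc x y) : ν ≤ |f' u| := by
  wlog hnonneg : ∀ t ∈ Icc x y, 0 ≤ f' t generalizing f f' f''
  · have hnonpos := hsign.resolve_left hnonneg
    simpa only [abs_neg] using this h.neg (Or.inl fun t ht => neg_nonneg.2 (hnonpos t ht))
      (by simpa only [abs_neg] using hx) (by simpa only [abs_neg] using hy)
      fun t ht => neg_nonneg.2 (hnonpos t ht)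
  by_contra! hlt
  have hmin := h.min_le_deriv hnonneg hu (by linarith [le_abs_self (f' u)])
  rw [abs_of_nonneg (hnonneg x ⟨le_rfl, hu.1.trans hu.2⟩),
    abs_of_nonneg (hnonneg y ⟨hu.1.trans hu.2, le_rfl⟩)] at *
  rw [abs_of_nonneg (hnonneg u hu)] at hlt
  exact hlt.not_ge ((le_min hx hy).trans hmin)

end IsMorseOn

/-- Both branches of `f` near a shared critical point `c` are brought to this form by
`x ↦ -x` and `f ↦ -f`. -/
structure IsRisingBranch (d ν : ℝ) (f f' f'' : ℝ → ℝ) (c b : ℝ) : Prop where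
  isMorseOn : IsMorseOn d f f' f'' (Icc c b)
  nonneg : ∀ t ∈ Icc c b, 0 ≤ f' t
  deriv_left : f' c = 0
  le_deriv_right : ν ≤ f' b

namespace IsRisingBranch

variable {d ν c b u v : ℝ} {f f' f'' : ℝ → ℝ}

theorem deriv_le_of_deriv_lt (h : IsRisingBranch d ν f f' f'' c b) (hνd : ν ≤ d)
    (hu : u ∈ Icc c b) (hv : v ∈ Icc c u) (hlt : f' u < ν) : f' v ≤ f' u := by
  have hmin := (h.isMorseOn.mono (Icc_subset_Icc hv.1 le_rfl)).min_le_deriv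
    (fun t ht => h.nonneg t ⟨hv.1.trans ht.1, ht.2⟩) ⟨hv.2, hu.2⟩ (hlt.trans_le hνd)
  exact (min_le_iff.1 hmin).resolve_right (hlt.trans_le h.le_deriv_right).not_ge

theorem mul_sub_le_deriv (h : IsRisingBranch d ν f f' f'' c b) (hνd : ν ≤ d)
    (hu : u ∈ Icc c b) (hlt : f' u < ν) : (d - ν) * (u - c) ≤ f' u := by
  rcases hu.1.eq_or_lt with rfl | hcu
  · simpa using h.nonneg _ hu
  obtain ⟨ξ, hξ, hmvt⟩ := exists_mem_Icc_sub_eq_mul hu.1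
    fun t ht => h.isMorseOn.hasDerivAt_deriv t ⟨ht.1, ht.2.trans hu.2⟩
  rw [h.deriv_left, sub_zero] at hmvt
  have hξb : ξ ∈ Icc c b := ⟨hξ.1, hξ.2.trans hu.2⟩
  have hf'ξ : f' ξ < ν := (h.deriv_le_of_deriv_lt hνd hu hξ hlt).trans_lt hlt
  have hf''ξ : 0 ≤ f'' ξ :=
    nonneg_of_mul_nonneg_left (hmvt ▸ h.nonneg u hu) (sub_pos.2 hcu)
  have hmorse := h.isMorseOn.le_abs_add_abs ξ hξb
  rw [abs_of_nonneg (h.nonneg ξ hξb), abs_of_nonneg hf''ξ] at hmorse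
  rw [hmvt]
  exact mul_le_mul_of_nonneg_right (by linarith) (sub_nonneg.2 hu.1)

theorem sub_le_of_deriv_lt (h : IsRisingBranch d ν f f' f'' c b) (hνd : ν < d)
    (hu : u ∈ Icc c b) (hlt : f' u < ν) :
    u - c ≤ ν / (d - ν) ∧ f u - f c ≤ ν * (ν / (d - ν)) := by
  have hdist : u - c ≤ ν / (d - ν) := by
    rw [le_div_iff₀ (sub_pos.2 hνd)]
    linarith [h.mul_sub_le_deriv hνd.le hu hlt]
  refine ⟨hdist, ?_⟩
  obtain ⟨ξ, hξ, hmvt⟩ := exists_mem_Icc_sub_eq_mul hu.1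
    fun t ht => h.isMorseOn.hasDerivAt t ⟨ht.1, ht.2.trans hu.2⟩
  calc f u - f c = f' ξ * (u - c) := hmvt
    _ ≤ ν * (u - c) := mul_le_mul_of_nonneg_right
        ((h.deriv_le_of_deriv_lt hνd.le hu hξ hlt).trans hlt.le) (sub_nonneg.2 hu.1)
    _ ≤ ν * (ν / (d - ν)) :=
        mul_le_mul_of_nonneg_left hdist ((h.nonneg u hu).trans hlt.le)

theorem sub_le_of_image_sub_le (h : IsRisingBranch d ν f f' f'' c b) (hν : 0 < ν) (hνd : ν < d)
    (hu : u ∈ Icc c b) (hfu : f u - f c ≤ ν * (ν / (d - ν))) : u - c ≤ 2 * (ν / (d - ν)) := by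
  set q := ν / (d - ν)
  have hq : (d - ν) * q = ν := mul_div_cancel₀ ν (sub_pos.2 hνd).ne'
  have hq₀ : 0 < q := div_pos hν (sub_pos.2 hνd)
  by_contra! hfar
  have hz : c + q ∈ Icc c u := ⟨by linarith, by linarith⟩
  have hsteep : ∀ t ∈ Icc (c + q) u, ν ≤ f' t := fun t ht => by
    by_contra! hlt
    have := h.mul_sub_le_deriv hνd.le ⟨hz.1.trans ht.1, ht.2.trans hu.2⟩ hlt
    nlinarith [ht.1]
  obtain ⟨ξ, hξ, hmvt⟩ := exists_mem_Icc_sub_eq_mul hz.2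
    fun t ht => h.isMorseOn.hasDerivAt t ⟨hz.1.trans ht.1, ht.2.trans hu.2⟩
  obtain ⟨ξ', hξ', hmvt'⟩ := exists_mem_Icc_sub_eq_mul hz.1
    fun t ht => h.isMorseOn.hasDerivAt t ⟨ht.1, ht.2.trans (hz.2.trans hu.2)⟩
  have hfar' : ν * (u - (c + q)) ≤ f u - f (c + q) :=
    hmvt ▸ mul_le_mul_of_nonneg_right (hsteep ξ hξ) (sub_nonneg.2 hz.2)
  have hnear : 0 ≤ f (c + q) - f c :=
    hmvt' ▸ mul_nonneg (h.nonneg ξ' ⟨hξ'.1, hξ'.2.trans (hz.2.trans hu.2)⟩) (sub_nonneg.2 hz.1)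
  nlinarith

end IsRisingBranch

namespace IsMorseOn

variable {d ν : ℝ} {f f' f'' : ℝ → ℝ}

theorem sub_le_of_abs_deriv_lt {a b c θ ψ : ℝ} (h : IsMorseOn d f f' f'' (Icc a b))
    (hneg : ∀ t ∈ Icc a c, f' t ≤ 0) (hpos : ∀ t ∈ Icc c b, 0 ≤ f' t)
    (ha : ν ≤ |f' a|) (hb : ν ≤ |f' b|) (hν : 0 < ν) (hνd : ν < d)
    (hθ : θ ∈ Icc a c) (hψ : ψ ∈ Icc c b) (hf : f θ = f ψ) (hsmall : |f' θ| < ν ∨ |f' ψ| < ν) :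
    ψ - θ ≤ 3 * (ν / (d - ν)) := by
  have hac : a ≤ c := hθ.1.trans hθ.2
  have hcb : c ≤ b := hψ.1.trans hψ.2
  have hc : f' c = 0 := le_antisymm (hneg c ⟨hac, le_rfl⟩) (hpos c ⟨le_rfl, hcb⟩)
  have hright : IsRisingBranch d ν f f' f'' c b :=
    ⟨h.mono (Icc_subset_Icc hac le_rfl), hpos, hc,
      by rwa [abs_of_nonneg (hpos b ⟨hcb, le_rfl⟩)] at hb⟩
  have hleft : IsRisingBranch d ν (fun t => f (-t)) (fun t => -f' (-t)) (fun t => f'' (-t))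
      (-c) (-a) :=
    ⟨by simpa only [neg_Icc] using (h.mono (Icc_subset_Icc le_rfl hcb)).comp_neg,
      fun t ht => neg_nonneg.2 (hneg (-t) ⟨le_neg.1 ht.2, neg_le.1 ht.1⟩),
      by simp [hc], by rwa [neg_neg, ← abs_of_nonpos (hneg a ⟨le_rfl, hac⟩)]⟩
  have hθ' : -θ ∈ Icc (-c) (-a) := ⟨neg_le_neg hθ.2, neg_le_neg hθ.1⟩
  rcases hsmall with hθs | hψs
  · obtain ⟨hdist, hlevel⟩ := hleft.sub_le_of_deriv_lt hνd hθ'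
      (by simpa only [neg_neg] using neg_lt.1 (abs_lt.1 hθs).1)
    simp only [neg_neg] at hlevel
    have := hright.sub_le_of_image_sub_le hν hνd hψ (hf ▸ hlevel)
    linarith
  · obtain ⟨hdist, hlevel⟩ := hright.sub_le_of_deriv_lt hνd hψ (abs_lt.1 hψs).2
    have := hleft.sub_le_of_image_sub_le hν hνd hθ' (by simpa only [neg_neg, hf] using hlevel)
    linarith

theorem sub_le_of_abs_deriv_lt_of_le {a₁ b₁ a₂ b₂ θ ψ : ℝ}
    (h : IsMorseOn d f f' f'' (Icc a₁ b₁ ∪ Icc a₂ b₂)) (h₁₂ : b₁ ≤ a₂)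
    (hneg : ∀ t ∈ Icc a₁ b₁, f' t ≤ 0) (hpos : ∀ t ∈ Icc a₂ b₂, 0 ≤ f' t)
    (hbdry : ∀ x ∈ frontier (Icc a₁ b₁ ∪ Icc a₂ b₂), ν ≤ |f' x|) (hν : 0 < ν) (hνd : ν < d)
    (hθ : θ ∈ Icc a₁ b₁) (hψ : ψ ∈ Icc a₂ b₂) (hf : f θ = f ψ)
    (hsmall : |f' θ| < ν ∨ |f' ψ| < ν) : ψ - θ ≤ 3 * (ν / (d - ν)) := by
  have h₁ : a₁ ≤ b₁ := hθ.1.trans hθ.2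
  have h₂ : a₂ ≤ b₂ := hψ.1.trans hψ.2
  have hU : Icc a₁ b₁ ∪ Icc a₂ b₂ ⊆ Icc a₁ b₂ :=
    union_subset (Icc_subset_Icc le_rfl (h₁₂.trans h₂)) (Icc_subset_Icc (h₁.trans h₁₂) le_rfl)
  have ha₁ : ν ≤ |f' a₁| := hbdry a₁ <| mem_frontier_of_subset_compl (t := Iio a₁)
    (Or.inl ⟨le_rfl, h₁⟩)
    (fun x hx hxU => (hU hxU).1.not_gt hx) (by rw [closure_Iio]; exact self_mem_Iic)
  have hb₂ : ν ≤ |f' b₂| := hbdry b₂ <| mem_frontier_of_subset_compl (t := Ioi b₂)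
    (Or.inr ⟨h₂, le_rfl⟩)
    (fun x hx hxU => (hU hxU).2.not_gt hx) (by rw [closure_Ioi]; exact self_mem_Ici)
  rcases h₁₂.eq_or_lt with rfl | hgap
  · rw [Icc_union_Icc_eq_Icc h₁ h₂] at h
    exact h.sub_le_of_abs_deriv_lt hneg hpos ha₁ hb₂ hν hνd hθ hψ hf hsmall
  have hgapU : Ioo b₁ a₂ ⊆ (Icc a₁ b₁ ∪ Icc a₂ b₂)ᶜ := by
    rintro x ⟨hx₁, hx₂⟩ (hx | hx)
    · exact hx.2.not_gt hx₁
    · exact hx.1.not_gt hx₂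
  have hb₁ : ν ≤ |f' b₁| := hbdry b₁ <| mem_frontier_of_subset_compl
    (Or.inl ⟨h₁, le_rfl⟩) hgapU (by rw [closure_Ioo hgap.ne]; exact ⟨le_rfl, hgap.le⟩)
  have ha₂ : ν ≤ |f' a₂| := hbdry a₂ <| mem_frontier_of_subset_compl
    (Or.inr ⟨le_rfl, h₂⟩) hgapU (by rw [closure_Ioo hgap.ne]; exact ⟨hgap.le, le_rfl⟩)
  rcases hsmall with hs | hs
  · exact absurd hs ((h.mono subset_union_left).le_abs_deriv_of_endpoints (Or.inr hneg) hνd.le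
      ha₁ hb₁ hθ).not_gt
  · exact absurd hs ((h.mono subset_union_right).le_abs_deriv_of_endpoints (Or.inl hpos) hνd.le
      ha₂ hb₂ hψ).not_gt

theorem abs_sub_le_of_abs_deriv_lt {am bm ap bp θ ψ : ℝ}
    (h : IsMorseOn d f f' f'' (Icc am bm ∪ Icc ap bp)) (hdisj : Ioo am bm ∩ Ioo ap bp = ∅)
    (ham : am < bm) (hap : ap < bp)
    (hneg : ∀ t ∈ Icc am bm, f' t ≤ 0) (hpos : ∀ t ∈ Icc ap bp, 0 ≤ f' t)
    (hbdry : ∀ x ∈ frontier (Icc am bm ∪ Icc ap bp), ν ≤ |f' x|) (hν : 0 < ν) (hνd : ν < d)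
    (hθ : θ ∈ Icc am bm) (hψ : ψ ∈ Icc ap bp) (hf : f θ = f ψ)
    (hsmall : |f' θ| < ν ∨ |f' ψ| < ν) : |ψ - θ| ≤ 3 * (ν / (d - ν)) := by
  have hconfig : bm ≤ ap ∨ bp ≤ am := by
    have := Ioo_disjoint_Ioo.1 (disjoint_iff_inter_eq_empty.2 hdisj)
    rw [min_le_iff, le_max_iff, le_max_iff] at this
    rcases this with (h | h) | (h | h)
    · exact absurd h ham.not_ge
    · exact Or.inl h
    · exact Or.inr h
    · exact absurd h hap.not_ge
  rcases hconfig with hle | hle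
  · rw [abs_of_nonneg (by linarith [hθ.2, hψ.1])]
    exact h.sub_le_of_abs_deriv_lt_of_le hle hneg hpos hbdry hν hνd hθ hψ hf hsmall
  · -- for `-f` the two branches swap roles
    have h' := h.neg
    rw [union_comm] at h'
    have := h'.sub_le_of_abs_deriv_lt_of_le hle (fun t ht => neg_nonpos.2 (hpos t ht))
      (fun t ht => neg_nonneg.2 (hneg t ht)) (by simpa only [union_comm, abs_neg] using hbdry)
      hν hνd hψ hθ (neg_inj.2 hf.symm) (by simpa only [abs_neg] using hsmall.symm)
    rw [abs_of_nonpos (by linarith [hθ.1, hψ.2])]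
    linarith

end IsMorseOn

theorem double_resonance_energy_separation_general
    (am bm ap bp d D ν : ℝ) (f f' f'' : ℝ → ℝ)
    (hdisj : Set.Ioo am bm ∩ Set.Ioo ap bp = ∅)
    (hder1 : ∀ θ ∈ Set.Icc am bm ∪ Set.Icc ap bp, HasDerivAt f (f' θ) θ)
    (hder2 : ∀ θ ∈ Set.Icc am bm ∪ Set.Icc ap bp, HasDerivAt f' (f'' θ) θ)
    (hneg : ∀ θ ∈ Set.Icc am bm, f' θ ≤ 0)
    (hpos : ∀ θ ∈ Set.Icc ap bp, 0 ≤ f' θ)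
    (hMorse : ∀ θ ∈ Set.Icc am bm ∪ Set.Icc ap bp,
      d ≤ |f' θ| + |f'' θ| ∧ |f' θ| + |f'' θ| ≤ D)
    (himg : f '' Set.Icc am bm = f '' Set.Icc ap bp)
    (hν : 0 < ν) (hνd : ν < d / 2)
    (hbdry : ∀ θ ∈ frontier (Set.Icc am bm ∪ Set.Icc ap bp), ν ≤ |f' θ|)
    -- the two branch inverses
    (gm gp : ℝ → ℝ)
    (hgm : ∀ E ∈ f '' Set.Icc am bm, gm E ∈ Set.Icc am bm ∧ f (gm E) = E)
    (hgp : ∀ E ∈ f '' Set.Icc am bm, gp E ∈ Set.Icc ap bp ∧ f (gp E) = E)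
    -- Diophantine data
    (C τ α : ℝ) (hC : 0 < C) (hτ : 0 < τ) (hα : IsDiophantine C τ α)
    (L : ℕ) (hL : 7 * ν / d ≤ C / (2 * (L : ℝ) ^ τ))
    (n m : ℤ) (hnm : n ≠ m)
    (hnL : |n| ≤ (L : ℤ)) (hmL : |m| ≤ (L : ℤ))
    (En Em : ℝ)
    (hEn : En ∈ interior (f '' Set.Icc am bm)) (hEm : Em ∈ interior (f '' Set.Icc am bm))
    (hresn : ∃ p : ℤ, gp En - gm En - (n : ℝ) * α = (p : ℝ))
    (hresm : ∃ q : ℤ, gp Em - gm Em - (m : ℝ) * α = (q : ℝ))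
    (hbetween : ∀ E ∈ Set.uIcc En Em, C / (2 * (L : ℝ) ^ τ) ≤ torusNorm (gp E - gm E)) :
    ν / 2 * torusNorm (((n : ℝ) - (m : ℝ)) * α) ≤ |En - Em| ∧
    C * ν / (2 * (2 * (L : ℝ)) ^ τ) ≤ ν / 2 * torusNorm (((n : ℝ) - (m : ℝ)) * α) := by
  have hM : IsMorseOn d f f' f'' (Icc am bm ∪ Icc ap bp) :=
    ⟨hder1, hder2, fun θ hθ => (hMorse θ hθ).1⟩
  have hd : 0 < d := by linarith
  have hJ : uIcc En Em ⊆ f '' Icc am bm :=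
    (isPreconnected_Icc.image f (hM.mono subset_union_left).continuousOn).ordConnected.uIcc_subset
      (interior_subset hEn) (interior_subset hEm)
  have hsteep : ∀ E ∈ uIcc En Em, ν ≤ |f' (gm E)| ∧ ν ≤ |f' (gp E)| := fun E hE => by
    simp only [← not_lt]
    refine not_or.1 fun hsmall => ?_
    obtain ⟨hgmE, hfgm⟩ := hgm E (hJ hE)
    obtain ⟨hgpE, hfgp⟩ := hgp E (hJ hE)
    have hsep := hM.abs_sub_le_of_abs_deriv_lt hdisj (lt_of_mem_interior_image_Icc hEn)
      (lt_of_mem_interior_image_Icc (himg ▸ hEn)) hneg hpos hbdry hν (by linarith) hgmE hgpE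
      (hfgm.trans hfgp.symm) hsmall
    linarith [three_mul_div_sub_lt_seven_mul_div hν hνd,
      (hbetween E hE).trans (torusNorm_le_abs (gp E - gm E))]
  have hlipm : ν * |gm En - gm Em| ≤ |En - Em| :=
    mul_abs_sub_le_abs_sub (fun t ht => hder1 t (Or.inl ht))
      (Or.inr ((hM.mono subset_union_left).strictAntiOn hd hneg))
      (fun E hE => hgm E (hJ hE)) fun E hE => (hsteep E hE).1
  have hlipp : ν * |gp En - gp Em| ≤ |En - Em| :=
    mul_abs_sub_le_abs_sub (fun t ht => hder1 t (Or.inr ht))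
      (Or.inl ((hM.mono subset_union_right).strictMonoOn hd hpos))
      (fun E hE => hgp E (hJ hE)) fun E hE => (hsteep E hE).2
  obtain ⟨p, hp⟩ := hresn
  obtain ⟨q, hq⟩ := hresm
  have hres := torusNorm_sub_mul_le hp hq
  rw [show gp En - gm En - (gp Em - gm Em) = (gp En - gp Em) - (gm En - gm Em) by ring] at hres
  refine ⟨by nlinarith [abs_sub (gp En - gp Em) (gm En - gm Em)], ?_⟩
  calc C * ν / (2 * (2 * (L : ℝ)) ^ τ) = ν / 2 * (C / (2 * L) ^ τ) := by ring
    _ ≤ _ := mul_le_mul_of_nonneg_left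
        (hα.div_rpow_le_torusNorm_sub hC.le hτ.le hnm hnL hmL) (by positivity)

/-- **Separation of double-resonant energies.** Under Assumption (C), for a `(C,τ)`-Diophantine
`α` and `L` with `C/(2L^τ) ≥ 7ν/d`: if `E_n ≠ E_m` are interior energies whose inverse-branch
differences `T_f(E_n) − nα`, `T_f(E_m) − mα` are integers (`n ≠ m`, `0 < |n|,|m| ≤ L`), and
`‖T_f‖_𝕋 ≥ C/(2L^τ)` between `E_n` and `E_m`, then
`|E_n − E_m| ≥ (ν/2)‖(n−m)α‖_𝕋 ≥ Cν/(2(2L)^τ)`. -/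
theorem double_resonance_energy_separation
    (am bm ap bp d D ν D₀ : ℝ) (f f' f'' : ℝ → ℝ)
    (hlem : am ≤ bm) (hlep : ap ≤ bp)
    (hdisj : Set.Ioo am bm ∩ Set.Ioo ap bp = ∅)
    (hd : 0 < d) (hdD : d ≤ D)
    (hder1 : ∀ θ ∈ Set.Icc am bm ∪ Set.Icc ap bp, HasDerivAt f (f' θ) θ)
    (hder2 : ∀ θ ∈ Set.Icc am bm ∪ Set.Icc ap bp, HasDerivAt f' (f'' θ) θ)
    (hcont2 : ContinuousOn f'' (Set.Icc am bm ∪ Set.Icc ap bp))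
    (hneg : ∀ θ ∈ Set.Icc am bm, f' θ ≤ 0)
    (hpos : ∀ θ ∈ Set.Icc ap bp, 0 ≤ f' θ)
    (hMorse : ∀ θ ∈ Set.Icc am bm ∪ Set.Icc ap bp,
      d ≤ |f' θ| + |f'' θ| ∧ |f' θ| + |f'' θ| ≤ D)
    (himg : f '' Set.Icc am bm = f '' Set.Icc ap bp)
    (hν : 0 < ν) (hνd : ν < d / 2)
    (hbdry : ∀ θ ∈ frontier (Set.Icc am bm ∪ Set.Icc ap bp), ν ≤ |f' θ|)
    (hD₀pos : 0 < D₀) (hD₀D : D₀ ≤ D)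
    (hD₀ : ∀ θ ∈ Set.Icc am bm ∪ Set.Icc ap bp, |f' θ| ≤ D₀)
    -- the two branch inverses
    (gm gp : ℝ → ℝ)
    (hgm : ∀ E ∈ f '' Set.Icc am bm, gm E ∈ Set.Icc am bm ∧ f (gm E) = E)
    (hgp : ∀ E ∈ f '' Set.Icc am bm, gp E ∈ Set.Icc ap bp ∧ f (gp E) = E)
    -- Diophantine data
    (C τ α : ℝ) (hC : 0 < C) (hτ : 0 < τ) (hα : IsDiophantine C τ α)
    (L : ℕ) (hL : 7 * ν / d ≤ C / (2 * (L : ℝ) ^ τ))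
    (n m : ℤ) (hnm : n ≠ m)
    (hn0 : n ≠ 0) (hnL : |n| ≤ (L : ℤ)) (hm0 : m ≠ 0) (hmL : |m| ≤ (L : ℤ))
    (En Em : ℝ)
    (hEn : En ∈ interior (f '' Set.Icc am bm)) (hEm : Em ∈ interior (f '' Set.Icc am bm))
    (hresn : ∃ p : ℤ, gp En - gm En - (n : ℝ) * α = (p : ℝ))
    (hresm : ∃ q : ℤ, gp Em - gm Em - (m : ℝ) * α = (q : ℝ))
    (hbetween : ∀ E ∈ Set.uIcc En Em, C / (2 * (L : ℝ) ^ τ) ≤ torusNorm (gp E - gm E)) :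
    ν / 2 * torusNorm (((n : ℝ) - (m : ℝ)) * α) ≤ |En - Em| ∧
    C * ν / (2 * (2 * (L : ℝ)) ^ τ) ≤ ν / 2 * torusNorm (((n : ℝ) - (m : ℝ)) * α) :=
  double_resonance_energy_separation_general am bm ap bp d D ν f f' f'' hdisj hder1 hder2 hneg hpos
    hMorse himg hν hνd hbdry gm gp hgm hgp C τ α hC hτ hα L hL n m hnm hnL hmL En Em hEn hEm hresn
    hresm hbetween
end

section
/- Under Assumption (C): let α be (C,τ)-Diophantine, let L ∈ ℕ, and let n be an integer with 0 < |n| ≤ L. Let E_n ∈ J satisfy T_f(E_n) − nα ∈ ℤ, and let θ_c be a critical point of f lying between the two preimages f₋^{−1}(E_n) and f₊^{−1}(E_n), with critical value E_c := f(θ_c). Then |E_n − E_c| ≥ C²d/(48·L^{2τ}). -/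
open Set Filter Topology

section TentBound

variable {g g' : ℝ → ℝ} {u v : ℝ}

lemma le_of_hasDerivAt_nonneg (huv : u ≤ v) (hg : ∀ x ∈ Icc u v, HasDerivAt g (g' x) x)
    (hg' : ∀ x ∈ Ioo u v, 0 ≤ g' x) : g u ≤ g v := by
  refine monotoneOn_of_hasDerivWithinAt_nonneg (f' := g') (convex_Icc u v)
    (fun x hx => (hg x hx).continuousAt.continuousWithinAt) (fun x hx => ?_) (fun x hx => ?_)
    (left_mem_Icc.2 huv) (right_mem_Icc.2 huv) huv
  all_goals rw [interior_Icc] at hx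
  · exact (hg x (Ioo_subset_Icc_self hx)).hasDerivWithinAt
  · exact hg' x hx

lemma mul_sub_le_sub_of_le_hasDerivAt {k : ℝ} (huv : u ≤ v)
    (hg : ∀ x ∈ Icc u v, HasDerivAt g (g' x) x) (hk : ∀ x ∈ Ioo u v, k ≤ g' x) :
    k * (v - u) ≤ g v - g u := by
  have := le_of_hasDerivAt_nonneg (g := fun x => g x - k * x) huv
    (fun x hx => ((hg x hx).sub ((hasDerivAt_id x).const_mul k)).congr_deriv (by simp))
    (fun x hx => sub_nonneg.2 (hk x hx))
  linarith

/-- The primitive of the tent `k * min (x - u) (v - x)` over `[u, v]` is `k * (v - u) ^ 2 / 4`. -/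
lemma mul_sq_div_four_le_sub_of_tent_le_hasDerivAt {k : ℝ} (huv : u ≤ v)
    (hg : ∀ x ∈ Icc u v, HasDerivAt g (g' x) x)
    (hk : ∀ x ∈ Icc u v, k * min (x - u) (v - x) ≤ g' x) :
    k * (v - u) ^ 2 / 4 ≤ g v - g u := by
  have rise := le_of_hasDerivAt_nonneg (g := fun x => g x - k / 2 * (x - u) ^ 2)
    (g' := fun x => g' x - k * (x - u)) (u := u) (v := (u + v) / 2) (by linarith)
    (fun x hx => ((hg x ⟨hx.1, by linarith [hx.2]⟩).sub <|
      ((((hasDerivAt_id x).sub_const u).pow 2).const_mul (k / 2)).congr_deriv (by simp; ring)))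
    (fun x hx => by
      have := hk x ⟨hx.1.le, by linarith [hx.2]⟩
      rw [min_eq_left (by linarith [hx.2])] at this
      linarith)
  have fall := le_of_hasDerivAt_nonneg (g := fun x => g x + k / 2 * (v - x) ^ 2)
    (g' := fun x => g' x - k * (v - x)) (u := (u + v) / 2) (v := v) (by linarith)
    (fun x hx => ((hg x ⟨by linarith [hx.1], hx.2⟩).add <|
      ((((hasDerivAt_id x).const_sub v).pow 2).const_mul (k / 2)).congr_deriv (by simp; ring)))
    (fun x hx => by
      have := hk x ⟨by linarith [hx.1], hx.2.le⟩
      rw [min_eq_right (by linarith [hx.1])] at this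
      linarith)
  simp only [sub_self] at rise fall
  nlinarith

lemma forall_lt_deriv_of_lt_abs_deriv {s : Set ℝ} {c t : ℝ} (hs : Convex ℝ s)
    (hg : ∀ x ∈ s, HasDerivAt g (g' x) x) (hc : 0 ≤ c) (habs : ∀ x ∈ s, c < |g' x|)
    (ht : t ∈ s) (hpos : 0 < g' t) : ∀ x ∈ s, c < g' x := by
  rcases hasDerivWithinAt_forall_lt_or_forall_gt_of_forall_ne hs
    (fun x hx => (hg x hx).hasDerivWithinAt) (m := 0)
    (fun x hx h0 => by linarith [habs x hx, abs_eq_zero.2 h0]) with hneg | hpos'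
  · exact absurd (hneg t ht) hpos.not_gt
  · intro x hx
    simpa [abs_of_pos (hpos' x hx)] using habs x hx

/-- Going left from `t`, `g` decreases at rate `> c` as long as it stays below `c`, so it never
climbs back to the level `c`. -/
lemma mul_sub_add_le_of_lt_deriv {c t : ℝ} (hc : 0 ≤ c) (hut : u ≤ t)
    (hg : ∀ x ∈ Icc u t, HasDerivAt g (g' x) x) (hM : ∀ x ∈ Icc u t, g x < c → c < |g' x|)
    (hgt : g t < c) (hg't : c < g' t) : c * (t - u) + g u ≤ g t := by
  have hcont : ContinuousOn g (Icc u t) := fun x hx => (hg x hx).continuousAt.continuousWithinAt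
  have hbelow : ∀ x ∈ Icc u t, g x < c := by
    by_contra! hK
    have hKc : IsCompact (Icc u t ∩ g ⁻¹' Ici c) :=
      isCompact_Icc.of_isClosed_subset
        (hcont.preimage_isClosed_of_isClosed isClosed_Icc isClosed_Ici) inter_subset_left
    obtain ⟨x, hx, hgx⟩ := hK
    obtain ⟨w, ⟨hw, hgw⟩, hwmax⟩ := hKc.exists_isGreatest ⟨x, hx, hgx⟩
    have hwt : w < t := lt_of_le_of_ne hw.2 (by rintro rfl; exact (not_le.2 hgt) hgw)
    have hlt : ∀ x ∈ Ioc w t, g x < c := fun x hx =>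
      not_le.1 fun h => (not_le.2 hx.1) (hwmax ⟨⟨hw.1.trans hx.1.le, hx.2⟩, h⟩)
    have hsub : Ioc w t ⊆ Icc u t := fun x hx => ⟨hw.1.trans hx.1.le, hx.2⟩
    have hrate := forall_lt_deriv_of_lt_abs_deriv (convex_Ioc w t) (fun x hx => hg x (hsub hx))
      hc (fun x hx => hM x (hsub hx) (hlt x hx)) (right_mem_Ioc.2 hwt) (hc.trans_lt hg't)
    have := mul_sub_le_sub_of_le_hasDerivAt hwt.le
      (fun x hx => hg x ⟨hw.1.trans hx.1, hx.2⟩) (fun x hx => (hrate x (Ioo_subset_Ioc_self hx)).le)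
    nlinarith [show (c : ℝ) ≤ g w from hgw]
  have hrate := forall_lt_deriv_of_lt_abs_deriv (convex_Icc u t) hg hc
    (fun x hx => hM x hx (hbelow x hx)) (right_mem_Icc.2 hut) (hc.trans_lt hg't)
  linarith [mul_sub_le_sub_of_le_hasDerivAt hut hg
    fun x hx => (hrate x (Ioo_subset_Icc_self hx)).le]

lemma mul_sub_add_le_of_deriv_lt_neg {c t : ℝ} (hc : 0 ≤ c) (htv : t ≤ v)
    (hg : ∀ x ∈ Icc t v, HasDerivAt g (g' x) x) (hM : ∀ x ∈ Icc t v, g x < c → c < |g' x|)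
    (hgt : g t < c) (hg't : g' t < -c) : c * (v - t) + g v ≤ g t := by
  have hmem : ∀ x ∈ Icc (-v) (-t), -x ∈ Icc t v :=
    fun x hx => ⟨by linarith [hx.2], by linarith [hx.1]⟩
  have := mul_sub_add_le_of_lt_deriv (g := fun x => g (-x)) (g' := fun x => -g' (-x)) hc
    (neg_le_neg htv)
    (fun x hx => ((hg (-x) (hmem x hx)).comp x (hasDerivAt_neg x)).congr_deriv (by ring))
    (fun x hx => by simpa only [abs_neg] using hM (-x) (hmem x hx))
    (by simpa using hgt) (by simp only [neg_neg]; linarith)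
  simpa [sub_eq_add_neg, add_comm] using this

lemma mul_min_le_of_lt_abs_deriv {a b c t : ℝ} (hc : 0 ≤ c)
    (hg : ∀ x ∈ Icc a b, HasDerivAt g (g' x) x) (hnn : ∀ x ∈ Icc a b, 0 ≤ g x)
    (hM : ∀ x ∈ Icc a b, g x < c → c < |g' x|) (ha : g a = 0) (ht : t ∈ Icc a b) :
    c * min (min (t - a) (b - t)) 1 ≤ g t := by
  rcases le_or_gt c (g t) with hct | hgt
  · nlinarith [min_le_right (min (t - a) (b - t)) 1]
  rcases lt_abs.1 (hM t ht hgt) with hpos | hneg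
  · have := mul_sub_add_le_of_lt_deriv hc ht.1 (fun x hx => hg x ⟨hx.1, hx.2.trans ht.2⟩)
      (fun x hx => hM x ⟨hx.1, hx.2.trans ht.2⟩) hgt hpos
    rw [ha] at this
    nlinarith [min_le_left (min (t - a) (b - t)) 1, min_le_left (t - a) (b - t)]
  · have := mul_sub_add_le_of_deriv_lt_neg hc ht.2 (fun x hx => hg x ⟨ht.1.trans hx.1, hx.2⟩)
      (fun x hx => hM x ⟨ht.1.trans hx.1, hx.2⟩) hgt (by linarith)
    nlinarith [min_le_left (min (t - a) (b - t)) 1, min_le_right (t - a) (b - t),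
      hnn b ⟨ht.1.trans ht.2, le_rfl⟩]

end TentBound

/-- The lower half of the Morse condition of Assumption (C)(i). -/
def MorseOn (d : ℝ) (f f' f'' : ℝ → ℝ) (s : Set ℝ) : Prop :=
  ∀ θ ∈ s, HasDerivAt f (f' θ) θ ∧ HasDerivAt f' (f'' θ) θ ∧ d ≤ |f' θ| + |f'' θ|

namespace MorseOn

variable {d : ℝ} {f f' f'' : ℝ → ℝ} {s t : Set ℝ}

lemma mono (h : MorseOn d f f' f'' s) (hts : t ⊆ s) : MorseOn d f f' f'' t :=
  fun θ hθ => h θ (hts hθ)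

lemma neg (h : MorseOn d f f' f'' s) :
    MorseOn d (fun x => -f x) (fun x => -f' x) (fun x => -f'' x) s := fun θ hθ => by
  obtain ⟨h1, h2, hM⟩ := h θ hθ
  exact ⟨h1.neg, h2.neg, by simpa only [abs_neg] using hM⟩

lemma comp_neg {a b : ℝ} (h : MorseOn d f f' f'' (Icc a b)) :
    MorseOn d (fun x => -f (-x)) (fun x => f' (-x)) (fun x => -f'' (-x)) (Icc (-b) (-a)) :=
  fun θ hθ => by
    obtain ⟨h1, h2, hM⟩ := h (-θ) ⟨by linarith [hθ.2], by linarith [hθ.1]⟩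
    refine ⟨(h1.comp θ (hasDerivAt_neg θ)).neg.congr_deriv (by ring),
      (h2.comp θ (hasDerivAt_neg θ)).congr_deriv (by ring), by simpa only [abs_neg] using hM⟩

lemma not_isLocalExtr (h : MorseOn d f f' f'' s) (hd : 0 < d) {θ : ℝ} (hθ : θ ∈ s)
    (hcrit : f' θ = 0) : ¬IsLocalExtr f' θ := fun hext => by
  obtain ⟨-, h2, hM⟩ := h θ hθ
  rw [hcrit, hext.hasDerivAt_eq_zero h2] at hM
  norm_num at hM
  linarith

lemma mem_inter_of_mem_interior_union (h : MorseOn d f f' f'' (s ∪ t)) (hd : 0 < d)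
    (hs : IsClosed s) (ht : IsClosed t) (hs' : ∀ x ∈ s, f' x ≤ 0) (ht' : ∀ x ∈ t, 0 ≤ f' x)
    {θ : ℝ} (hθ : θ ∈ interior (s ∪ t)) (hcrit : f' θ = 0) : θ ∈ s ∩ t := by
  have hnhds := isOpen_interior.mem_nhds hθ
  refine ⟨by_contra fun hθs => ?_, by_contra fun hθt => ?_⟩ <;>
    refine h.not_isLocalExtr hd (interior_subset hθ) hcrit ?_
  · refine IsMinFilter.isExtr ?_
    filter_upwards [hnhds, hs.isOpen_compl.mem_nhds hθs] with x hx hxs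
    exact hcrit ▸ ht' x ((interior_subset hx).resolve_left hxs)
  · refine IsMaxFilter.isExtr ?_
    filter_upwards [hnhds, ht.isOpen_compl.mem_nhds hθt] with x hx hxt
    exact hcrit ▸ hs' x ((interior_subset hx).resolve_right hxt)

lemma mul_sq_le_sub {a b r x : ℝ} (h : MorseOn d f f' f'' (Icc a b)) (hd : 0 ≤ d)
    (hnn : ∀ x ∈ Icc a b, 0 ≤ f' x) (hcrit : f' a = 0) (hr0 : 0 ≤ r) (hr2 : r ≤ 2)
    (hx : x ∈ Icc a b) (hax : a + r ≤ x) : d * r ^ 2 / 8 ≤ f x - f a := by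
  have htent : ∀ θ ∈ Icc a b, d / 2 * min (min (θ - a) (b - θ)) 1 ≤ f' θ :=
    fun θ => mul_min_le_of_lt_abs_deriv (by linarith) (fun θ hθ => (h θ hθ).2.1) hnn
      (fun θ hθ hlt => by
        have := (h θ hθ).2.2
        rw [abs_of_nonneg (hnn θ hθ)] at this
        linarith) hcrit
  have hrise := mul_sq_div_four_le_sub_of_tent_le_hasDerivAt (k := d / 2) (u := a) (v := a + r)
    (by linarith) (fun θ hθ => (h θ ⟨hθ.1, by linarith [hθ.2, hx.2]⟩).1) fun θ hθ => by
      refine le_trans ?_ (htent θ ⟨hθ.1, by linarith [hθ.2, hx.2]⟩)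
      refine mul_le_mul_of_nonneg_left ?_ (by linarith)
      refine le_min (min_le_min_left _ (by linarith [hx.2])) ?_
      -- the tent over `[a, a + r]` has height `r / 2 ≤ 1`
      rcases min_cases (θ - a) (a + r - θ) with h' | h' <;> linarith [h'.1]
  have hmono := le_of_hasDerivAt_nonneg hax
    (fun θ hθ => (h θ ⟨by linarith [hθ.1], hθ.2.trans hx.2⟩).1)
    fun θ hθ => hnn θ ⟨by linarith [hθ.1], hθ.2.le.trans hx.2⟩
  nlinarith

lemma mul_sq_le_abs_sub {a b r x θ : ℝ} (h : MorseOn d f f' f'' (Icc a b)) (hd : 0 ≤ d)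
    (hnn : ∀ x ∈ Icc a b, 0 ≤ f' x) (hθ : θ ∈ Icc a b) (hcrit : f' θ = 0) (hr0 : 0 ≤ r)
    (hr2 : r ≤ 2) (hx : x ∈ Icc a b) (hxθ : r ≤ |x - θ|) : d * r ^ 2 / 8 ≤ |f x - f θ| := by
  rcases le_abs'.1 hxθ with hleft | hright
  · have := (h.comp_neg.mono (Icc_subset_Icc_left (neg_le_neg hθ.2))).mul_sq_le_sub hd
      (fun y hy => hnn (-y) ⟨by linarith [hy.2], by linarith [hy.1, hθ.2]⟩)
      (by simpa using hcrit) hr0 hr2 ⟨by linarith, neg_le_neg hx.1⟩ (by linarith)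
    simp only [neg_neg] at this
    linarith [neg_abs_le (f x - f θ)]
  · have := (h.mono (Icc_subset_Icc_left hθ.1)).mul_sq_le_sub hd
      (fun y hy => hnn y ⟨hθ.1.trans hy.1, hy.2⟩) hcrit hr0 hr2 ⟨by linarith, hx.2⟩ (by linarith)
    exact this.trans (le_abs_self _)

lemma mul_sq_le_abs_sub_of_preimages {am bm ap bp θc θm θp E r : ℝ}
    (h : MorseOn d f f' f'' (Icc am bm ∪ Icc ap bp)) (hd : 0 ≤ d)
    (hneg : ∀ x ∈ Icc am bm, f' x ≤ 0) (hpos : ∀ x ∈ Icc ap bp, 0 ≤ f' x)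
    (hcm : θc ∈ Icc am bm) (hcp : θc ∈ Icc ap bp) (hcrit : f' θc = 0)
    (hθm : θm ∈ Icc am bm) (hθp : θp ∈ Icc ap bp) (hfm : f θm = E) (hfp : f θp = E)
    (hr0 : 0 ≤ r) (hr2 : r ≤ 2) (hsep : 2 * r ≤ |θp - θm|) : d * r ^ 2 / 8 ≤ |E - f θc| := by
  rcases le_or_gt r |θp - θc| with hfar | hnear
  · simpa [hfp] using (h.mono subset_union_right).mul_sq_le_abs_sub hd hpos hcp hcrit
      hr0 hr2 hθp hfar
  · have hfar : r ≤ |θm - θc| := by linarith [abs_sub_le θp θc θm, abs_sub_comm θc θm]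
    have := (h.mono subset_union_left).neg.mul_sq_le_abs_sub hd
      (fun x hx => neg_nonneg.2 (hneg x hx)) hcm (by simp [hcrit]) hr0 hr2 hθm hfar
    rwa [hfm, neg_sub_neg, abs_sub_comm] at this

end MorseOn

namespace IsDiophantine

variable {C τ α : ℝ}

lemma le_one_half (h : IsDiophantine C τ α) : C ≤ 1 / 2 := by
  simpa using (h 1 one_ne_zero (round α)).trans (by simpa using abs_sub_round α)

lemma div_rpow_le (h : IsDiophantine C τ α) (hC : 0 ≤ C) (hτ : 0 ≤ τ) {L : ℕ} {n : ℤ}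
    (hn : n ≠ 0) (hnL : |n| ≤ (L : ℤ)) (p : ℤ) :
    C / (L : ℝ) ^ τ ≤ |(n : ℝ) * α - (p : ℝ)| := by
  have hn1 : (1 : ℝ) ≤ |(n : ℝ)| := by exact_mod_cast Int.one_le_abs hn
  have hnL' : |(n : ℝ)| ≤ L := by exact_mod_cast hnL
  refine le_trans (div_le_div_of_nonneg_left hC (by positivity) ?_) (h n hn p)
  exact Real.rpow_le_rpow (by linarith) hnL' hτ

end IsDiophantine

theorem double_resonance_separation_from_critical_value_general
    (am bm ap bp d D ν : ℝ) (f f' f'' : ℝ → ℝ)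
    (hd : 0 < d)
    (hder1 : ∀ θ ∈ Set.Icc am bm ∪ Set.Icc ap bp, HasDerivAt f (f' θ) θ)
    (hder2 : ∀ θ ∈ Set.Icc am bm ∪ Set.Icc ap bp, HasDerivAt f' (f'' θ) θ)
    (hneg : ∀ θ ∈ Set.Icc am bm, f' θ ≤ 0)
    (hpos : ∀ θ ∈ Set.Icc ap bp, 0 ≤ f' θ)
    (hMorse : ∀ θ ∈ Set.Icc am bm ∪ Set.Icc ap bp,
      d ≤ |f' θ| + |f'' θ| ∧ |f' θ| + |f'' θ| ≤ D)
    (hν : 0 < ν)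
    (hbdry : ∀ θ ∈ frontier (Set.Icc am bm ∪ Set.Icc ap bp), ν ≤ |f' θ|)
    (C τ α : ℝ) (hC : 0 < C) (hτ : 0 < τ) (hα : IsDiophantine C τ α)
    (L : ℕ) (n : ℤ) (hn0 : n ≠ 0) (hnL : |n| ≤ (L : ℤ))
    (En : ℝ)
    (θm θp : ℝ) (hθm : θm ∈ Set.Icc am bm) (hθp : θp ∈ Set.Icc ap bp)
    (hfm : f θm = En) (hfp : f θp = En)
    (hres : ∃ p : ℤ, θp - θm = (n : ℝ) * α - (p : ℝ))
    (θc : ℝ) (hθc : θc ∈ Set.Icc am bm ∪ Set.Icc ap bp)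
    (hθcrit : f' θc = 0) :
    C ^ 2 * d / (48 * (L : ℝ) ^ (2 * τ)) ≤ |En - f θc| := by
  have hM : MorseOn d f f' f'' (Icc am bm ∪ Icc ap bp) :=
    fun θ hθ => ⟨hder1 θ hθ, hder2 θ hθ, (hMorse θ hθ).1⟩
  have hint : θc ∈ interior (Icc am bm ∪ Icc ap bp) := by
    rw [← self_sdiff_frontier]
    exact ⟨hθc, fun hfr => by linarith [hbdry θc hfr, hθcrit ▸ abs_zero (α := ℝ)]⟩
  obtain ⟨hcm, hcp⟩ := hM.mem_inter_of_mem_interior_union hd isClosed_Icc isClosed_Icc hneg hpos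
    hint hθcrit
  set P := (L : ℝ) ^ τ
  have hP : 1 ≤ P := Real.one_le_rpow (by exact_mod_cast (Int.one_le_abs hn0).trans hnL) hτ.le
  set r := C / (2 * P) with hr
  have hr0 : 0 ≤ r := by positivity
  have hr2 : r ≤ 2 := by
    rw [div_le_iff₀ (by positivity)]
    nlinarith [hα.le_one_half]
  obtain ⟨p, hp⟩ := hres
  have hsep : 2 * r ≤ |θp - θm| := by
    rw [hp, show 2 * r = C / P by rw [hr]; field_simp]
    exact hα.div_rpow_le hC.le hτ.le hn0 hnL p
  have hgrowth := hM.mul_sq_le_abs_sub_of_preimages hd.le hneg hpos hcm hcp hθcrit hθm hθp hfm hfp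
    hr0 hr2 hsep
  have hL : (L : ℝ) ^ (2 * τ) = P ^ 2 := by
    rw [mul_comm, Real.rpow_mul (Nat.cast_nonneg L), Real.rpow_two]
  calc C ^ 2 * d / (48 * (L : ℝ) ^ (2 * τ)) ≤ C ^ 2 * d / (32 * P ^ 2) := by
        rw [hL]; gcongr; norm_num
    _ = d * r ^ 2 / 8 := by rw [hr]; field_simp; ring
    _ ≤ |En - f θc| := hgrowth

/-- **Separation of double-resonant energies from critical values.** Under Assumption (C), for a
`(C,τ)`-Diophantine `α`, `0 < |n| ≤ L`, a double-resonant energy `E_n ∈ J` (i.e.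
`T_f(E_n) − nα ∈ ℤ`, phrased via the branch preimages `θ₋, θ₊`), and a critical point `θ_c`
of `f` lying between `θ₋` and `θ₊` with critical value `E_c = f(θ_c)`:
`|E_n − E_c| ≥ C²d/(48L^{2τ})`. -/
theorem double_resonance_separation_from_critical_value
    (am bm ap bp d D ν : ℝ) (f f' f'' : ℝ → ℝ)
    (hlem : am ≤ bm) (hlep : ap ≤ bp)
    (hdisj : Set.Ioo am bm ∩ Set.Ioo ap bp = ∅)
    (hd : 0 < d) (hdD : d ≤ D)
    (hder1 : ∀ θ ∈ Set.Icc am bm ∪ Set.Icc ap bp, HasDerivAt f (f' θ) θ)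
    (hder2 : ∀ θ ∈ Set.Icc am bm ∪ Set.Icc ap bp, HasDerivAt f' (f'' θ) θ)
    (hcont2 : ContinuousOn f'' (Set.Icc am bm ∪ Set.Icc ap bp))
    (hneg : ∀ θ ∈ Set.Icc am bm, f' θ ≤ 0)
    (hpos : ∀ θ ∈ Set.Icc ap bp, 0 ≤ f' θ)
    (hMorse : ∀ θ ∈ Set.Icc am bm ∪ Set.Icc ap bp,
      d ≤ |f' θ| + |f'' θ| ∧ |f' θ| + |f'' θ| ≤ D)
    (himg : f '' Set.Icc am bm = f '' Set.Icc ap bp)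
    (hν : 0 < ν) (hνd : ν < d / 2)
    (hbdry : ∀ θ ∈ frontier (Set.Icc am bm ∪ Set.Icc ap bp), ν ≤ |f' θ|)
    (C τ α : ℝ) (hC : 0 < C) (hτ : 0 < τ) (hα : IsDiophantine C τ α)
    (L : ℕ) (n : ℤ) (hn0 : n ≠ 0) (hnL : |n| ≤ (L : ℤ))
    (En : ℝ) (hEn : En ∈ f '' Set.Icc am bm)
    (θm θp : ℝ) (hθm : θm ∈ Set.Icc am bm) (hθp : θp ∈ Set.Icc ap bp)
    (hfm : f θm = En) (hfp : f θp = En)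
    (hres : ∃ p : ℤ, θp - θm = (n : ℝ) * α - (p : ℝ))
    (θc : ℝ) (hθc : θc ∈ Set.Icc am bm ∪ Set.Icc ap bp)
    (hθcrit : f' θc = 0) (hbtw : θc ∈ Set.uIcc θm θp) :
    C ^ 2 * d / (48 * (L : ℝ) ^ (2 * τ)) ≤ |En - f θc| :=
  double_resonance_separation_from_critical_value_general am bm ap bp d D ν f f' f'' hd hder1 hder2
    hneg hpos hMorse hν hbdry C τ α hC hτ hα L n hn0 hnL En θm θp hθm hθp hfm hfp hres θc hθc hθcrit
end

section
/- In the bootstrap setting, assume: (i) Λ_l and Λ_r satisfy the Green's function decay property for (ℓ, γ); (ii) H^{Λ̂} − E is invertible and ‖P (H^{Λ̂} − E)^{−1} Γ_𝒫‖ ≤ 2/ρ̂ in operator norm; (iii) |Λ| ≤ M. Let ℓ̂ ∈ ℕ with ℓ̂ > 16·|log ε|·M and set γ̌ := γ − 6·|log ε|·M/ℓ̂. Then Λ̂ satisfies the Green's function decay property for (ℓ̂, γ̌): for all m, n ∈ Λ̂ with |m − n| ≥ ℓ̂, |((H^{Λ̂} − E)^{−1})(m,n)| ≤ e^{−γ̌|m−n|}.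 -/
/-- The Dirichlet restriction `H^{[lo,hi]}` of `εΔ + V` to an integer interval. -/
noncomputable def dirichletMatrix (ε : ℝ) (V : ℤ → ℝ) (lo hi : ℤ) :
    Matrix ↥(Finset.Icc lo hi) ↥(Finset.Icc lo hi) ℝ :=
  Matrix.of fun m n =>
    if (m : ℤ) = (n : ℤ) then V (m : ℤ)
    else if ((m : ℤ) - (n : ℤ)).natAbs = 1 then ε else 0

/-- `[lo,hi]` satisfies the Green's function decay property for `(ℓ, γ)` at energy `E`. -/
def hasGreenDecay (ε : ℝ) (V : ℤ → ℝ) (E : ℝ) (lo hi : ℤ) (ℓ : ℕ) (γ : ℝ) : Prop :=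
  IsUnit (dirichletMatrix ε V lo hi - E • 1) ∧
  ∀ m n : ↥(Finset.Icc lo hi), (ℓ : ℝ) ≤ |((m : ℤ) : ℝ) - ((n : ℤ) : ℝ)| →
    |(dirichletMatrix ε V lo hi - E • 1)⁻¹ m n| ≤
      Real.exp (-γ * |((m : ℤ) : ℝ) - ((n : ℤ) : ℝ)|)

/-- Index of the block of the three-block partition `Λ_l = [A,a−1], Λ = [a,b], Λ_r = [b+1,B]`
containing `k`. -/
def blk3 (a b k : ℤ) : ℕ := if k < a then 0 else if k ≤ b then 1 else 2

/-- `Γ_𝒫`: the coupling matrix of the three-block partition, whose only nonzero entries are the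
four `ε`'s of `H^{Λ̂}` joining `Λ_l` to `Λ` and `Λ` to `Λ_r`. -/
noncomputable def gamma3 (ε : ℝ) (A B a b : ℤ) :
    Matrix ↥(Finset.Icc A B) ↥(Finset.Icc A B) ℝ :=
  Matrix.of fun m n =>
    if ((m : ℤ) - (n : ℤ)).natAbs = 1 ∧ blk3 a b (m : ℤ) ≠ blk3 a b (n : ℤ) then ε else 0

/-- The diagonal projection `P` onto the coordinates in `[a − ℓ, b + ℓ] ∩ [A,B]`. -/
def projP (A B a b : ℤ) (ℓ : ℕ) : Matrix ↥(Finset.Icc A B) ↥(Finset.Icc A B) ℝ :=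
  Matrix.of fun m n =>
    if m = n ∧ a - (ℓ : ℤ) ≤ (m : ℤ) ∧ (m : ℤ) ≤ b + (ℓ : ℤ) then 1 else 0

/-!
Write `G^I` for the Green's function of `H − E` on an interval `I`, extended by zero. The
geometric resolvent identity expresses `G^Λ̂(x, ·)`, for `x` in a shoulder, through `G` of that
shoulder and a single coupling term `ε G^shoulder(x, edge) G^Λ̂(edge', ·)` across its inner edge.
Since column `a − 1` (resp. `b + 1`) of `P G^Λ̂ Γ_𝒫` is `ε` times column `a` (resp. `b`) of
`P G^Λ̂`, hypothesis (ii) bounds `ε |G^Λ̂(x, a)|` and `ε |G^Λ̂(x, b)|` by `2/ρ̂` for `x` within `ℓ`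
of `Λ`, and one more application of the identity extends this to all `x`. If `x < y` are far
apart, then `x` lies at distance `≥ ℓ` from `Λ` in `Λ_l` or `y` does so in `Λ_r`; expanding from
that endpoint gives `|G^Λ̂(x, y)| ≤ (1 + 2/ρ̂) e^{−γ(|x−y| − 2M − 1)}`, and because
`ℓ̂ > 16 |log ε| M` the prefactor and the loss `2M + 1` are absorbed by lowering the rate to
`γ − 6 |log ε| M / ℓ̂`.
-/

open Finset Matrix Real

section Green

variable (ε : ℝ) (V : ℤ → ℝ) (E : ℝ)

def schrodingerOp (u : ℤ → ℝ) (k : ℤ) : ℝ :=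
  ε * u (k - 1) + (V k - E) * u k + ε * u (k + 1)

/- Extended by zero off `[lo, hi]²`, so that boundary terms such as `green ε V E A B (A - 1) n` in
the resolvent identity vanish without side conditions. -/
noncomputable def green (lo hi x y : ℤ) : ℝ :=
  if h : x ∈ Icc lo hi ∧ y ∈ Icc lo hi then
    (dirichletMatrix ε V lo hi - E • 1)⁻¹ ⟨x, h.1⟩ ⟨y, h.2⟩
  else 0

variable {ε V E} {lo hi : ℤ}

lemma inv_apply_eq_green (m n : Icc lo hi) :
    (dirichletMatrix ε V lo hi - E • 1)⁻¹ m n = green ε V E lo hi m n := by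
  simp [green, m.2, n.2]

lemma green_of_notMem_left {x : ℤ} (hx : x ∉ Icc lo hi) (y : ℤ) : green ε V E lo hi x y = 0 := by
  simp [green, hx]

lemma green_of_notMem_right (x : ℤ) {y : ℤ} (hy : y ∉ Icc lo hi) : green ε V E lo hi x y = 0 := by
  simp [green, hy]

lemma dirichletMatrix_sub_apply (m n : Icc lo hi) :
    (dirichletMatrix ε V lo hi - E • 1) m n =
      if (m : ℤ) = n then V m - E else if ((m : ℤ) - n).natAbs = 1 then ε else 0 := by
  by_cases h : (m : ℤ) = n
  · simp [dirichletMatrix, Subtype.ext h]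
  · have hmn : m ≠ n := fun e => h (congrArg _ e)
    simp [dirichletMatrix, h, hmn]

lemma dirichletMatrix_sub_transpose :
    (dirichletMatrix ε V lo hi - E • 1)ᵀ = dirichletMatrix ε V lo hi - E • 1 := by
  ext m n
  rw [transpose_apply, dirichletMatrix_sub_apply, dirichletMatrix_sub_apply]
  split_ifs <;> grind

lemma green_symm (x y : ℤ) : green ε V E lo hi x y = green ε V E lo hi y x := by
  unfold green
  by_cases h : x ∈ Icc lo hi ∧ y ∈ Icc lo hi
  · rw [dif_pos h, dif_pos h.symm, ← transpose_apply (dirichletMatrix ε V lo hi - E • 1)⁻¹,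
      transpose_nonsing_inv, dirichletMatrix_sub_transpose]
  · rw [dif_neg h, dif_neg (h ∘ And.symm)]

lemma mulVec_eq_schrodingerOp {u : ℤ → ℝ} (hu : ∀ j ∉ Icc lo hi, u j = 0)
    {k : ℤ} (hk : k ∈ Icc lo hi) :
    ((dirichletMatrix ε V lo hi - E • 1) *ᵥ fun j : Icc lo hi => u j) ⟨k, hk⟩ =
      schrodingerOp ε V E u k := by
  set f : ℤ → ℝ := fun j => (if k = j then V k - E else if (k - j).natAbs = 1 then ε else 0) * u j
  calc ((dirichletMatrix ε V lo hi - E • 1) *ᵥ fun j : Icc lo hi => u j) ⟨k, hk⟩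
      = ∑ j ∈ Icc lo hi, f j := by
        simp only [mulVec, dotProduct, dirichletMatrix_sub_apply, f]
        exact sum_coe_sort (Icc lo hi) f
    _ = ∑ j ∈ {k - 1, k, k + 1}, f j := by
        rw [sum_subset (subset_union_left (s₂ := ({k - 1, k, k + 1} : Finset ℤ)))
          (fun j _ hj => ?_), ← sum_subset subset_union_right (fun j _ hj => ?_)]
        · simp only [mem_insert, mem_singleton, not_or] at hj
          simp only [f]
          rw [if_neg (by omega), if_neg (by omega), zero_mul]
        · simp only [f, hu j hj, mul_zero]
    _ = schrodingerOp ε V E u k := by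
        rw [sum_insert (by simp only [mem_insert, mem_singleton]; omega),
          sum_insert (by simp), sum_singleton]
        have hl : f (k - 1) = ε * u (k - 1) := by simp [f, show k ≠ k - 1 by omega]
        have hc : f k = (V k - E) * u k := by simp [f]
        have hr : f (k + 1) = ε * u (k + 1) := by simp [f]
        rw [hl, hc, hr, schrodingerOp]
        ring

lemma schrodingerOp_green (hinv : IsUnit (dirichletMatrix ε V lo hi - E • 1)) {k : ℤ}
    (hk : k ∈ Icc lo hi) (n : ℤ) :
    schrodingerOp ε V E (fun j => green ε V E lo hi j n) k = if k = n then 1 else 0 := by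
  by_cases hn : n ∈ Icc lo hi
  · rw [← mulVec_eq_schrodingerOp (fun j hj => green_of_notMem_left hj n) hk]
    simp only [mulVec, dotProduct, ← inv_apply_eq_green _ ⟨n, hn⟩]
    rw [← mul_apply, mul_nonsing_inv _ ((isUnit_iff_isUnit_det _).mp hinv), one_apply]
    simp only [Subtype.mk.injEq]
  · simp [schrodingerOp, green_of_notMem_right _ hn, show k ≠ n by grind]

lemma eq_sum_green_mul_schrodingerOp (hinv : IsUnit (dirichletMatrix ε V lo hi - E • 1))
    {u : ℤ → ℝ} (hu : ∀ j ∉ Icc lo hi, u j = 0) {m : ℤ} (hm : m ∈ Icc lo hi) :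
    u m = ∑ k ∈ Icc lo hi, green ε V E lo hi m k * schrodingerOp ε V E u k := by
  set D := dirichletMatrix ε V lo hi - E • 1
  have h := congrFun (mulVec_mulVec (fun j : Icc lo hi => u j) D⁻¹ D) ⟨m, hm⟩
  rw [nonsing_inv_mul _ ((isUnit_iff_isUnit_det _).mp hinv), one_mulVec] at h
  rw [← h, mulVec, dotProduct, ← sum_coe_sort (Icc lo hi)]
  refine sum_congr rfl fun k _ => ?_
  rw [inv_apply_eq_green, mulVec_eq_schrodingerOp hu k.2]

lemma green_resolvent_identity {A B : ℤ} (hA : A ≤ lo) (hB : hi ≤ B)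
    (hinv : IsUnit (dirichletMatrix ε V A B - E • 1))
    (hinvS : IsUnit (dirichletMatrix ε V lo hi - E • 1)) {m : ℤ} (hm : m ∈ Icc lo hi) (n : ℤ) :
    green ε V E A B m n = green ε V E lo hi m n
      - ε * green ε V E lo hi m lo * green ε V E A B (lo - 1) n
      - ε * green ε V E lo hi m hi * green ε V E A B (hi + 1) n := by
  set u : ℤ → ℝ := fun j => if j ∈ Icc lo hi then green ε V E A B j n else 0
  have hu : ∀ j ∉ Icc lo hi, u j = 0 := fun j hj => if_neg hj
  have hLu : ∀ k ∈ Icc lo hi, schrodingerOp ε V E u k = (if k = n then 1 else 0)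
      - (if k = lo then ε * green ε V E A B (lo - 1) n else 0)
      - (if k = hi then ε * green ε V E A B (hi + 1) n else 0) := by
    intro k hk
    rw [← schrodingerOp_green hinv (Icc_subset_Icc hA hB hk) n]
    simp only [schrodingerOp, u, mem_Icc] at hk ⊢
    split_ifs <;> first | omega | (subst_vars; ring)
  have hmu : green ε V E A B m n = u m := (if_pos hm).symm
  rw [hmu, eq_sum_green_mul_schrodingerOp hinvS hu hm, sum_congr rfl fun k hk => by rw [hLu k hk]]
  obtain ⟨hm₁, hm₂⟩ := mem_Icc.mp hm
  have hlo : lo ∈ Icc lo hi := left_mem_Icc.mpr (hm₁.trans hm₂)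
  have hhi : hi ∈ Icc lo hi := right_mem_Icc.mpr (hm₁.trans hm₂)
  simp only [mul_sub, sum_sub_distrib, mul_ite, mul_one, mul_zero, sum_ite_eq', if_pos hlo,
    if_pos hhi]
  split_ifs with hn
  · ring
  · rw [green_of_notMem_right _ hn]; ring

lemma hasGreenDecay.abs_green_le {ℓ : ℕ} {γ : ℝ}
    (h : hasGreenDecay ε V E lo hi ℓ γ) {x y : ℤ} (hxy : x + ℓ ≤ y) :
    |green ε V E lo hi x y| ≤ exp (-γ * (y - x)) := by
  by_cases hxy' : x ∈ Icc lo hi ∧ y ∈ Icc lo hi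
  · have hd : |(x : ℝ) - y| = y - x := by
      rw [abs_sub_comm, abs_of_nonneg (by exact_mod_cast (by omega : (0 : ℤ) ≤ y - x))]
    have := h.2 ⟨x, hxy'.1⟩ ⟨y, hxy'.2⟩ (by rw [hd]; exact_mod_cast (by omega : (ℓ : ℤ) ≤ y - x))
    rwa [inv_apply_eq_green, hd] at this
  · simp only [green, dif_neg hxy', abs_zero]
    positivity

lemma hasGreenDecay.abs_green_le' {ℓ : ℕ} {γ : ℝ}
    (h : hasGreenDecay ε V E lo hi ℓ γ) {x y : ℤ} (hxy : x + ℓ ≤ y) :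
    |green ε V E lo hi y x| ≤ exp (-γ * (y - x)) := by
  rw [green_symm]
  exact h.abs_green_le hxy

end Green

open scoped RealInnerProductSpace in
lemma abs_apply_le_norm_toEuclideanCLM {n : Type*} [Fintype n] [DecidableEq n]
    (X : Matrix n n ℝ) (i j : n) : |X i j| ≤ ‖toEuclideanCLM (𝕜 := ℝ) X‖ := by
  set T := toEuclideanCLM (𝕜 := ℝ) X
  calc |X i j| = |⟪EuclideanSpace.single i 1, T (EuclideanSpace.single j 1)⟫| := by
        rw [inner_toEuclideanCLM]; simp
    _ ≤ ‖EuclideanSpace.single i (1 : ℝ)‖ * ‖T (EuclideanSpace.single j 1)‖ :=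
        abs_real_inner_le_norm _ _
    _ ≤ ‖T‖ := by simpa using T.le_opNorm (EuclideanSpace.single j 1)

section Coupling

variable {A B a b : ℤ}

lemma projP_mul_apply {ℓ : ℕ} (X : Matrix (Icc A B) (Icc A B) ℝ) {i : Icc A B}
    (hi₁ : a - ℓ ≤ (i : ℤ)) (hi₂ : (i : ℤ) ≤ b + ℓ) (j : Icc A B) :
    (projP A B a b ℓ * X) i j = X i j := by
  rw [mul_apply, sum_eq_single i (fun k _ hk => by simp [projP, Ne.symm hk]) (by simp)]
  rw [projP, of_apply, if_pos ⟨rfl, hi₁, hi₂⟩, one_mul]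

lemma mul_gamma3_apply_left_edge (ε : ℝ) (hab : a ≤ b) (X : Matrix (Icc A B) (Icc A B) ℝ)
    (i : Icc A B) (ha₁ : a - 1 ∈ Icc A B) (ha : a ∈ Icc A B) :
    (X * gamma3 ε A B a b) i ⟨a - 1, ha₁⟩ = X i ⟨a, ha⟩ * ε := by
  rw [mul_apply, sum_eq_single ⟨a, ha⟩ (fun k _ hk => ?_) (by simp)]
  · simp [gamma3, blk3, hab]
  · have hk' : (k : ℤ) ≠ a := fun e => hk (Subtype.ext e)
    have hΓ : ¬(((k : ℤ) - (a - 1)).natAbs = 1 ∧ blk3 a b k ≠ blk3 a b (a - 1)) := by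
      rintro ⟨h₁, h₂⟩
      simp only [blk3] at h₂
      split_ifs at h₂ <;> omega
    simp [gamma3, hΓ]

lemma mul_gamma3_apply_right_edge (ε : ℝ) (hab : a ≤ b) (X : Matrix (Icc A B) (Icc A B) ℝ)
    (i : Icc A B) (hb₁ : b + 1 ∈ Icc A B) (hb : b ∈ Icc A B) :
    (X * gamma3 ε A B a b) i ⟨b + 1, hb₁⟩ = X i ⟨b, hb⟩ * ε := by
  rw [mul_apply, sum_eq_single ⟨b, hb⟩ (fun k _ hk => ?_) (by simp)]
  · simp [gamma3, blk3, show ¬ b < a by omega, show ¬ b + 1 < a by omega]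
  · have hk' : (k : ℤ) ≠ b := fun e => hk (Subtype.ext e)
    have hΓ : ¬(((k : ℤ) - (b + 1)).natAbs = 1 ∧ blk3 a b k ≠ blk3 a b (b + 1)) := by
      rintro ⟨h₁, h₂⟩
      simp only [blk3] at h₂
      split_ifs at h₂ <;> omega
    simp [gamma3, hΓ]

end Coupling

section Estimates

lemma exp_neg_mul_le_one {γ : ℝ} (hγ : 0 ≤ γ) {t : ℝ} (ht : 0 ≤ t) : exp (-γ * t) ≤ 1 :=
  exp_le_one_iff.mpr (by nlinarith)

lemma abs_sub_mul_le {ε γ T P Q c s t₁ t₂ u : ℝ} (hγ : 0 ≤ γ) (hε : 0 ≤ ε) (hc : 0 ≤ c)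
    (hT : |T| ≤ exp (-γ * s)) (hP : |P| ≤ exp (-γ * t₁)) (hQ : ε * |Q| ≤ c * exp (-γ * t₂))
    (hs : u ≤ s) (ht : u ≤ t₁ + t₂) :
    |T - ε * P * Q| ≤ (1 + c) * exp (-γ * u) := by
  have hsu : exp (-γ * s) ≤ exp (-γ * u) := exp_le_exp.mpr (by nlinarith)
  have htu : exp (-γ * t₁) * exp (-γ * t₂) ≤ exp (-γ * u) := by
    rw [← exp_add]; exact exp_le_exp.mpr (by nlinarith)
  calc |T - ε * P * Q| ≤ |T| + |P| * (ε * |Q|) := by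
        rw [show |P| * (ε * |Q|) = |ε * P * Q| by rw [abs_mul, abs_mul, abs_of_nonneg hε]; ring]
        exact abs_sub _ _
    _ ≤ exp (-γ * s) + exp (-γ * t₁) * (c * exp (-γ * t₂)) :=
        add_le_add hT (mul_le_mul hP hQ (by positivity) (by positivity))
    _ ≤ (1 + c) * exp (-γ * u) := by nlinarith

lemma log_le_abs_log_of_le_inv {x c : ℝ} (hx : 0 < x) (h : x ≤ c⁻¹) :
    log c ≤ |log x| := by
  have := log_le_log hx h
  rw [log_inv] at this
  linarith [neg_le_abs (log x)]

lemma one_lt_log_four : 1 < log 4 := by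
  rw [show (4 : ℝ) = 2 ^ 2 by norm_num, log_pow]
  push_cast
  linarith [log_two_gt_d9]

lemma one_add_two_div_mul_exp_le {L M γ ρ d ℓ' : ℝ} (hL : log 4 ≤ L) (hγ : 0 < γ) (hγL : γ ≤ L)
    (hρ₀ : 0 < ρ) (hρ : ρ < 1 / 2) (hρM : |log ρ| ≤ M) (hℓ' : 16 * L * M < ℓ') (hd : ℓ' ≤ d) :
    (1 + 2 / ρ) * exp (-γ * (d - 2 * M - 1)) ≤ exp (-(γ - 6 * L * M / ℓ') * d) := by
  have hM : log 2 ≤ M := (log_le_abs_log_of_le_inv hρ₀ (by linarith)).trans hρM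
  have hlog2 := log_two_gt_d9
  have hlog4 : log 4 = 2 * log 2 := by
    rw [show (4 : ℝ) = 2 ^ 2 by norm_num, log_pow]; push_cast; ring
  have hℓ'₀ : 0 < ℓ' := by nlinarith
  have hlog : log (1 + 2 / ρ) ≤ L + M := by
    have h3 : 1 + 2 / ρ ≤ 3 / ρ := by
      rw [show 3 / ρ = 1 / ρ + 2 / ρ by ring]
      gcongr
      rw [le_div_iff₀ hρ₀]; linarith
    calc log (1 + 2 / ρ) ≤ log (3 / ρ) := log_le_log (by positivity) h3
      _ = log 3 - log ρ := log_div (by norm_num) hρ₀.ne'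
      _ ≤ log 4 + |log ρ| := by
          rw [sub_eq_add_neg]
          exact add_le_add (log_le_log (by norm_num) (by norm_num)) (neg_le_abs _)
      _ ≤ L + M := add_le_add hL hρM
  have hscale : 6 * L * M ≤ 6 * L * M / ℓ' * d := by
    rw [div_mul_eq_mul_div, le_div_iff₀ hℓ'₀]
    exact mul_le_mul_of_nonneg_left hd (by nlinarith)
  have hcore : L + M + γ * (2 * M + 1) ≤ 6 * L * M := by
    nlinarith [mul_le_mul_of_nonneg_right hγL (by linarith : (0 : ℝ) ≤ 2 * M + 1)]
  rw [← exp_log (by positivity : 0 < 1 + 2 / ρ), ← exp_add]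
  exact exp_le_exp.mpr (by nlinarith)

end Estimates

section Bootstrap

variable {ε : ℝ} {V : ℤ → ℝ} {E : ℝ} {A B a b : ℤ} {ℓ : ℕ} {γ r M : ℝ}

lemma eps_mul_abs_green_le_of_window (hε : 0 ≤ ε) (hAa : A ≤ a) (hab : a ≤ b) (hbB : b ≤ B)
    (hres : ‖toEuclideanCLM (𝕜 := ℝ)
      (projP A B a b ℓ * (dirichletMatrix ε V A B - E • 1)⁻¹ * gamma3 ε A B a b)‖ ≤ r)
    {x : ℤ} (hx : x ∈ Icc A B) (hx₁ : a - ℓ ≤ x) (hx₂ : x ≤ b + ℓ) {n : ℤ}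
    (hn : n = a ∧ A ≤ a - 1 ∨ n = b ∧ b + 1 ≤ B) :
    ε * |green ε V E A B x n| ≤ r := by
  have hentry := abs_apply_le_norm_toEuclideanCLM
    (projP A B a b ℓ * (dirichletMatrix ε V A B - E • 1)⁻¹ * gamma3 ε A B a b) ⟨x, hx⟩
  rcases hn with ⟨rfl, hA⟩ | ⟨rfl, hB⟩
  · have h := hentry ⟨n - 1, mem_Icc.mpr ⟨hA, by omega⟩⟩
    rw [mul_gamma3_apply_left_edge ε hab _ _ _ (mem_Icc.mpr ⟨hAa, hab.trans hbB⟩),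
      projP_mul_apply _ hx₁ hx₂, inv_apply_eq_green, abs_mul, abs_of_nonneg hε, mul_comm] at h
    exact h.trans hres
  · have h := hentry ⟨n + 1, mem_Icc.mpr ⟨by omega, hB⟩⟩
    rw [mul_gamma3_apply_right_edge ε hab _ _ _ (mem_Icc.mpr ⟨hAa.trans hab, hbB⟩),
      projP_mul_apply _ hx₁ hx₂, inv_apply_eq_green, abs_mul, abs_of_nonneg hε, mul_comm] at h
    exact h.trans hres

lemma green_eq_of_mem_left (haB : a ≤ B + 1) (hinv : IsUnit (dirichletMatrix ε V A B - E • 1))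
    (hinvL : IsUnit (dirichletMatrix ε V A (a - 1) - E • 1)) {x : ℤ} (hx : x ∈ Icc A (a - 1))
    (n : ℤ) :
    green ε V E A B x n = green ε V E A (a - 1) x n
      - ε * green ε V E A (a - 1) x (a - 1) * green ε V E A B a n := by
  rw [green_resolvent_identity le_rfl (by omega) hinv hinvL hx n,
    green_of_notMem_left (x := A - 1) (by simp) n, sub_add_cancel]
  ring

lemma green_eq_of_mem_right (hAb : A ≤ b + 1) (hinv : IsUnit (dirichletMatrix ε V A B - E • 1))
    (hinvR : IsUnit (dirichletMatrix ε V (b + 1) B - E • 1)) {y : ℤ} (hy : y ∈ Icc (b + 1) B)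
    (n : ℤ) :
    green ε V E A B y n = green ε V E (b + 1) B y n
      - ε * green ε V E (b + 1) B y (b + 1) * green ε V E A B b n := by
  rw [green_resolvent_identity (by omega) le_rfl hinv hinvR hy n,
    green_of_notMem_left (x := B + 1) (by simp) n, add_sub_cancel_right]
  ring

lemma eps_mul_abs_green_eq_of_mem_left (hε : 0 ≤ ε) (haB : a ≤ B + 1)
    (hinv : IsUnit (dirichletMatrix ε V A B - E • 1))
    (hinvL : IsUnit (dirichletMatrix ε V A (a - 1) - E • 1)) {x : ℤ} (hx : x ∈ Icc A (a - 1))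
    {n : ℤ} (hn : a ≤ n) :
    ε * |green ε V E A B x n|
      = ε * |green ε V E A (a - 1) x (a - 1)| * (ε * |green ε V E A B a n|) := by
  rw [green_eq_of_mem_left haB hinv hinvL hx, green_of_notMem_right _ (by simp; omega), zero_sub,
    abs_neg, abs_mul, abs_mul, abs_of_nonneg hε]
  ring

lemma eps_mul_abs_green_eq_of_mem_right (hε : 0 ≤ ε) (hAb : A ≤ b + 1)
    (hinv : IsUnit (dirichletMatrix ε V A B - E • 1))
    (hinvR : IsUnit (dirichletMatrix ε V (b + 1) B - E • 1)) {y : ℤ} (hy : y ∈ Icc (b + 1) B)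
    {n : ℤ} (hn : n ≤ b) :
    ε * |green ε V E A B y n|
      = ε * |green ε V E (b + 1) B y (b + 1)| * (ε * |green ε V E A B b n|) := by
  rw [green_eq_of_mem_right hAb hinv hinvR hy, green_of_notMem_right _ (by simp; omega), zero_sub,
    abs_neg, abs_mul, abs_mul, abs_of_nonneg hε]
  ring

lemma eps_mul_abs_green_le (hε₀ : 0 ≤ ε) (hε₁ : ε ≤ 1) (hγ : 0 ≤ γ)
    (hAa : A ≤ a) (hab : a ≤ b) (hbB : b ≤ B)
    (hdecl : hasGreenDecay ε V E A (a - 1) ℓ γ) (hdecr : hasGreenDecay ε V E (b + 1) B ℓ γ)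
    (hinv : IsUnit (dirichletMatrix ε V A B - E • 1))
    (hres : ‖toEuclideanCLM (𝕜 := ℝ)
      (projP A B a b ℓ * (dirichletMatrix ε V A B - E • 1)⁻¹ * gamma3 ε A B a b)‖ ≤ r)
    {x : ℤ} (hx : x ∈ Icc A B) {n : ℤ} (hn : n = a ∧ A ≤ a - 1 ∨ n = b ∧ b + 1 ≤ B) :
    ε * |green ε V E A B x n| ≤ r := by
  have hwindow : ∀ {z : ℤ}, z ∈ Icc A B → a - ℓ ≤ z → z ≤ b + ℓ →
      ε * |green ε V E A B z n| ≤ r := fun hz hz₁ hz₂ =>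
    eps_mul_abs_green_le_of_window hε₀ hAa hab hbB hres hz hz₁ hz₂ hn
  obtain ⟨hxA, hxB⟩ := mem_Icc.mp hx
  by_cases hxl : x + ℓ ≤ a - 1
  · have hP : |green ε V E A (a - 1) x (a - 1)| ≤ 1 :=
      (hdecl.abs_green_le hxl).trans
        (exp_neg_mul_le_one hγ (sub_nonneg.mpr (Int.cast_le.mpr (by omega))))
    rw [eps_mul_abs_green_eq_of_mem_left hε₀ (by omega) hinv hdecl.1
      (mem_Icc.mpr ⟨hxA, by omega⟩) (by omega), ← one_mul r]
    exact mul_le_mul (mul_le_one₀ hε₁ (abs_nonneg _) hP)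
      (hwindow (mem_Icc.mpr ⟨hAa, hab.trans hbB⟩) (by omega) (by omega))
      (by positivity) zero_le_one
  by_cases hxr : b + 1 + ℓ ≤ x
  · have hP : |green ε V E (b + 1) B x (b + 1)| ≤ 1 :=
      (hdecr.abs_green_le' hxr).trans
        (exp_neg_mul_le_one hγ (sub_nonneg.mpr (Int.cast_le.mpr (by omega))))
    rw [eps_mul_abs_green_eq_of_mem_right hε₀ (by omega) hinv hdecr.1
      (mem_Icc.mpr ⟨by omega, hxB⟩) (by omega), ← one_mul r]
    exact mul_le_mul (mul_le_one₀ hε₁ (abs_nonneg _) hP)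
      (hwindow (mem_Icc.mpr ⟨hAa.trans hab, hbB⟩) (by omega) (by omega))
      (by positivity) zero_le_one
  exact hwindow hx (by omega) (by omega)

lemma eps_mul_abs_green_le_exp (hε₀ : 0 ≤ ε) (hε₁ : ε ≤ 1) (hγ : 0 ≤ γ)
    (hAa : A ≤ a) (hab : a ≤ b) (hbB : b ≤ B)
    (hdecl : hasGreenDecay ε V E A (a - 1) ℓ γ) (hdecr : hasGreenDecay ε V E (b + 1) B ℓ γ)
    (hinv : IsUnit (dirichletMatrix ε V A B - E • 1))
    (hres : ‖toEuclideanCLM (𝕜 := ℝ)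
      (projP A B a b ℓ * (dirichletMatrix ε V A B - E • 1)⁻¹ * gamma3 ε A B a b)‖ ≤ r)
    (hA : A ≤ a - 1) {y : ℤ} (hy : y ∈ Icc A B) :
    ε * |green ε V E A B y a| ≤ r * exp (-γ * (y - b - 1 - ℓ)) := by
  have hbound := fun {z : ℤ} (hz : z ∈ Icc A B) => eps_mul_abs_green_le hε₀ hε₁ hγ hAa hab hbB
    hdecl hdecr hinv hres hz (n := a) (Or.inl ⟨rfl, hA⟩)
  have hr : 0 ≤ r := (mul_nonneg hε₀ (abs_nonneg _)).trans (hbound hy)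
  by_cases hyr : b + 1 + ℓ ≤ y
  · have hP : ε * |green ε V E (b + 1) B y (b + 1)| ≤ exp (-γ * (y - b - 1 - ℓ)) := by
      refine (mul_le_of_le_one_left (abs_nonneg _) hε₁).trans
        ((hdecr.abs_green_le' hyr).trans (exp_le_exp.mpr ?_))
      push_cast
      nlinarith [(Nat.cast_nonneg ℓ : (0 : ℝ) ≤ ℓ)]
    rw [eps_mul_abs_green_eq_of_mem_right hε₀ (by omega) hinv hdecr.1
      (mem_Icc.mpr ⟨by omega, (mem_Icc.mp hy).2⟩) hab, mul_comm r]
    exact mul_le_mul hP (hbound (mem_Icc.mpr ⟨hAa.trans hab, hbB⟩)) (by positivity)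
      (exp_pos _).le
  · refine (hbound hy).trans (le_mul_of_one_le_right hr (one_le_exp ?_))
    have : (y : ℝ) < b + 1 + ℓ := by exact_mod_cast (by omega : y < b + 1 + ℓ)
    nlinarith

lemma abs_green_le_of_add_le (hε₀ : 0 ≤ ε) (hε₁ : ε ≤ 1) (hγ : 0 ≤ γ)
    (hAa : A ≤ a) (hab : a ≤ b) (hbB : b ≤ B) (hℓM : (ℓ : ℝ) ≤ M) (hΛM : (b : ℝ) - a + 1 ≤ M)
    (hdecl : hasGreenDecay ε V E A (a - 1) ℓ γ) (hdecr : hasGreenDecay ε V E (b + 1) B ℓ γ)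
    (hinv : IsUnit (dirichletMatrix ε V A B - E • 1))
    (hres : ‖toEuclideanCLM (𝕜 := ℝ)
      (projP A B a b ℓ * (dirichletMatrix ε V A B - E • 1)⁻¹ * gamma3 ε A B a b)‖ ≤ r)
    {x y : ℤ} (hx : x ∈ Icc A B) (hy : y ∈ Icc A B) (hxy : (x : ℝ) + 3 * M ≤ y) :
    |green ε V E A B x y| ≤ (1 + r) * exp (-γ * (y - x - 2 * M - 1)) := by
  have hr : 0 ≤ r := (norm_nonneg _).trans hres
  have hℓ : (0 : ℝ) ≤ ℓ := Nat.cast_nonneg ℓ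
  have hxℓy : x + ℓ ≤ y := by exact_mod_cast (by linarith : (x : ℝ) + ℓ ≤ y)
  obtain ⟨hxA, hxB⟩ := mem_Icc.mp hx
  obtain ⟨hyA, hyB⟩ := mem_Icc.mp hy
  by_cases hxl : x + ℓ ≤ a - 1
  · rw [green_eq_of_mem_left (by omega) hinv hdecl.1
      (mem_Icc.mpr ⟨hxA, by omega⟩)]
    refine abs_sub_mul_le hγ hε₀ hr (hdecl.abs_green_le hxℓy) (hdecl.abs_green_le hxl) ?_
      (s := y - x) (t₂ := y - b - 1 - ℓ) (by linarith) (by push_cast; linarith)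
    rw [green_symm]
    exact eps_mul_abs_green_le_exp hε₀ hε₁ hγ hAa hab hbB hdecl hdecr hinv hres (by omega) hy
  · have hyr : b + 1 + ℓ ≤ y := by
      have : (a : ℝ) - ℓ ≤ x := by exact_mod_cast (by omega : a - ℓ ≤ x)
      exact_mod_cast (by linarith : (b : ℝ) + 1 + ℓ ≤ y)
    rw [green_symm, green_eq_of_mem_right (by omega) hinv hdecr.1
      (mem_Icc.mpr ⟨by omega, hyB⟩)]
    refine abs_sub_mul_le hγ hε₀ hr (hdecr.abs_green_le' hxℓy) (hdecr.abs_green_le' hyr) ?_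
      (s := y - x) (t₂ := 0) (by linarith) ?_
    · rw [green_symm, mul_zero, exp_zero, mul_one]
      exact eps_mul_abs_green_le hε₀ hε₁ hγ hAa hab hbB hdecl hdecr hinv hres hx
        (Or.inr ⟨rfl, by omega⟩)
    · have : (a : ℝ) - ℓ ≤ x := by exact_mod_cast (by omega : a - ℓ ≤ x)
      push_cast
      linarith

lemma abs_green_le_of_three_mul_le (hε₀ : 0 ≤ ε) (hε₁ : ε ≤ 1) (hγ : 0 ≤ γ)
    (hAa : A ≤ a) (hab : a ≤ b) (hbB : b ≤ B) (hℓM : (ℓ : ℝ) ≤ M) (hΛM : (b : ℝ) - a + 1 ≤ M)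
    (hdecl : hasGreenDecay ε V E A (a - 1) ℓ γ) (hdecr : hasGreenDecay ε V E (b + 1) B ℓ γ)
    (hinv : IsUnit (dirichletMatrix ε V A B - E • 1))
    (hres : ‖toEuclideanCLM (𝕜 := ℝ)
      (projP A B a b ℓ * (dirichletMatrix ε V A B - E • 1)⁻¹ * gamma3 ε A B a b)‖ ≤ r)
    {x y : ℤ} (hx : x ∈ Icc A B) (hy : y ∈ Icc A B) (hxy : 3 * M ≤ |(x : ℝ) - y|) :
    |green ε V E A B x y| ≤ (1 + r) * exp (-γ * (|(x : ℝ) - y| - 2 * M - 1)) := by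
  rcases le_total (x : ℝ) y with h | h
  · rw [abs_sub_comm, abs_of_nonneg (sub_nonneg.mpr h)] at hxy ⊢
    exact abs_green_le_of_add_le hε₀ hε₁ hγ hAa hab hbB hℓM hΛM hdecl hdecr hinv hres hx hy
      (by linarith)
  · rw [abs_of_nonneg (sub_nonneg.mpr h)] at hxy ⊢
    rw [green_symm]
    exact abs_green_le_of_add_le hε₀ hε₁ hγ hAa hab hbB hℓM hΛM hdecl hdecr hinv hres hy hx
      (by linarith)

end Bootstrap

/-- **Bootstrapped Green's function decay** (cf. Lemma A.2): if the shoulders `Λ_l, Λ_r` of the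
three-block partition of `Λ̂ = [A,B]` have `(ℓ,γ)` Green's function decay, the decoupled resolvent
bound `‖P (H^{Λ̂} − E)⁻¹ Γ_𝒫‖ ≤ 2/ρ̂` holds, and `|Λ| ≤ M := max(ℓ, |log ρ̂|)`, then for any
`ℓ̂ > 16|log ε| M`, the interval `Λ̂` has Green's function decay for `(ℓ̂, γ − 6|log ε| M/ℓ̂)`. -/
theorem bootstrap_green_decay
    (ε : ℝ) (hε0 : 0 < ε) (hε : ε < 1 / 7) (V : ℤ → ℝ) (E : ℝ)
    (A B a b : ℤ) (hAa : A ≤ a) (hab : a ≤ b) (hbB : b ≤ B)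
    (ρ' γ : ℝ) (ℓ ℓhat : ℕ)
    (hρ0 : 0 < ρ') (hρ : ρ' < 1 / 2) (hγ1 : 1 < γ) (hγ2 : γ ≤ |Real.log ε|)
    (hM : ((b - a + 1 : ℤ) : ℝ) ≤ max (ℓ : ℝ) |Real.log ρ'|)
    (hdecl : hasGreenDecay ε V E A (a - 1) ℓ γ)
    (hdecr : hasGreenDecay ε V E (b + 1) B ℓ γ)
    (hinv : IsUnit (dirichletMatrix ε V A B - E • 1))
    (hres : ‖Matrix.toEuclideanCLM (𝕜 := ℝ)
        (projP A B a b ℓ * (dirichletMatrix ε V A B - E • 1)⁻¹ * gamma3 ε A B a b)‖ ≤ 2 / ρ')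
    (hℓhat : 16 * |Real.log ε| * max (ℓ : ℝ) |Real.log ρ'| < (ℓhat : ℝ)) :
    hasGreenDecay ε V E A B ℓhat
      (γ - 6 * |Real.log ε| * max (ℓ : ℝ) |Real.log ρ'| / (ℓhat : ℝ)) := by
  set M := max (ℓ : ℝ) |Real.log ρ'|
  have hL : Real.log 4 ≤ |Real.log ε| :=
    log_le_abs_log_of_le_inv hε0 (by linarith)
  have hM₀ : 0 ≤ M := (abs_nonneg _).trans (le_max_right _ _)
  have hΛM : (b : ℝ) - a + 1 ≤ M := by push_cast at hM; exact hM
  refine ⟨hinv, fun m n hmn => ?_⟩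
  have h3M : 3 * M ≤ |((m : ℤ) : ℝ) - n| := by nlinarith [one_lt_log_four]
  rw [inv_apply_eq_green]
  calc _ ≤ (1 + 2 / ρ') * Real.exp (-γ * (|((m : ℤ) : ℝ) - n| - 2 * M - 1)) :=
        abs_green_le_of_three_mul_le hε0.le (by linarith) (by linarith) hAa hab hbB
          (le_max_left _ _) hΛM hdecl hdecr hinv hres m.2 n.2 h3M
    _ ≤ _ := one_add_two_div_mul_exp_le hL (by linarith) hγ2 hρ0 hρ (le_max_right _ _) hℓhat hmn
end
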